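/- arXiv:1902.09366 — 3 statements merged into one kernel-verified Lean document; each statement's English description precedes it below -/
import Mathlib

section
/- Every positive harmonic function defined on all of ℝⁿ is constant: if u : ℝⁿ → ℝ is harmonic on ℝⁿ and u(x) > 0 for all x, then u is constant. -/
open Metric MeasureTheory

/-- The Euclidean Laplacian of `u` at `x`: sum of pure second partial derivatives. -/
noncomputable def lap {n : ℕ} (u : EuclideanSpace ℝ (Fin n) → ℝ)
    (x : EuclideanSpace ℝ (Fin n)) : ℝ :=
  ∑ i : Fin n,
    fderiv ℝ (fun y => fderiv ℝ u y (EuclideanSpace.single i 1)) x (EuclideanSpace.single i 1)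

/-- `u` is harmonic on `U`: it is `C²` on `U` and its Laplacian vanishes on `U`. -/
def HarmonicOn {n : ℕ} (u : EuclideanSpace ℝ (Fin n) → ℝ)
    (U : Set (EuclideanSpace ℝ (Fin n))) : Prop :=
  ContDiffOn ℝ 2 u U ∧ ∀ x ∈ U, lap u x = 0

namespace LiouvilleHarmonic

variable {n : ℕ}

local notation "E" => EuclideanSpace ℝ (Fin n)

lemma sum_coord (y : E) : y = ∑ i, y i • EuclideanSpace.single i (1:ℝ) := by
  have := (EuclideanSpace.basisFun (Fin n) ℝ).sum_repr y
  simp only [EuclideanSpace.basisFun_repr, EuclideanSpace.basisFun_apply] at this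
  exact this.symm

lemma clm_apply_eq_sum (φ : E →L[ℝ] ℝ) (y : E) :
    φ y = ∑ i, y i * φ (EuclideanSpace.single i 1) := by
  conv_lhs => rw [sum_coord y]
  rw [map_sum]
  simp [smul_eq_mul]

/-- Integration by parts principle: integral of a directional derivative of a compactly
supported `C¹` function vanishes. -/
lemma integral_fderiv_eq_zero (F : E → ℝ) (hF : ContDiff ℝ 1 F) (hs : HasCompactSupport F)
    (v : E) : ∫ y, fderiv ℝ F y v = 0 := by
  obtain ⟨L, hL⟩ := hF.lipschitzWith_of_hasCompactSupport hs one_ne_zero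
  have h := LipschitzWith.integral_lineDeriv_mul_eq (μ := volume)
    (LipschitzWith.const (1:ℝ)) hL hs (-v)
  have hz : ∀ x : E, lineDeriv ℝ (fun _ => (1:ℝ)) x (-v) = 0 := by
    intro x; simp [lineDeriv]
  simp only [hz, zero_mul, integral_zero, neg_neg, mul_one] at h
  rw [h]
  refine integral_congr_ae ?_
  filter_upwards with y
  exact ((hF.differentiable one_ne_zero) y).lineDeriv_eq_fderiv.symm

section Bump

variable (c : ContDiffBump (0:ℝ))

noncomputable def psi (c : ContDiffBump (0:ℝ)) (y : EuclideanSpace ℝ (Fin n)) : ℝ := c (‖y‖ ^ 2)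

noncomputable def Wb (c : ContDiffBump (0:ℝ)) (y : EuclideanSpace ℝ (Fin n)) : ℝ :=
  (∫ t in (0:ℝ)..c.rOut, c t) - ∫ t in (0:ℝ)..(‖y‖ ^ 2), c t

lemma psi_contDiff : ContDiff ℝ 1 (psi c : E → ℝ) :=
  c.contDiff.comp (contDiff_norm_sq ℝ)

lemma psi_continuous : Continuous (psi c : E → ℝ) := (psi_contDiff c).continuous

lemma psi_nonneg (y : E) : 0 ≤ psi c y := c.nonneg

lemma psi_le_one (y : E) : psi c y ≤ 1 := c.le_one

lemma psi_eq_zero {y : E} (h : c.rOut ≤ ‖y‖ ^ 2) : psi c y = 0 := by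
  apply c.zero_of_le_dist
  rwa [Real.dist_eq, sub_zero, abs_of_nonneg (by positivity)]

lemma psi_eq_one {y : E} (h : ‖y‖ ^ 2 ≤ c.rIn) : psi c y = 1 := by
  apply c.one_of_mem_closedBall
  rw [mem_closedBall, Real.dist_eq, sub_zero, abs_of_nonneg (by positivity)]
  exact h

lemma sq_big {y : E} (h : y ∉ closedBall (0:E) (max 1 c.rOut)) : c.rOut ≤ ‖y‖ ^ 2 := by
  rw [mem_closedBall, dist_zero_right, not_le] at h
  have h1 : (1:ℝ) ≤ ‖y‖ := le_of_lt (lt_of_le_of_lt (le_max_left _ _) h)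
  have h2 : c.rOut < ‖y‖ := lt_of_le_of_lt (le_max_right _ _) h
  nlinarith [norm_nonneg y]

lemma psi_supp : HasCompactSupport (psi c : E → ℝ) := by
  apply HasCompactSupport.intro (isCompact_closedBall (0:E) (max 1 c.rOut))
  intro y hy
  exact psi_eq_zero c (sq_big c hy)

lemma G_hasDerivAt (s : ℝ) : HasDerivAt (fun s => ∫ t in (0:ℝ)..s, (c:ℝ→ℝ) t) (c s) s := by
  apply intervalIntegral.integral_hasDerivAt_right
    (c.continuous.intervalIntegrable _ _)
    (c.continuous.stronglyMeasurableAtFilter _ _)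
    c.continuous.continuousAt

lemma G_contDiff : ContDiff ℝ 1 (fun s => ∫ t in (0:ℝ)..s, (c:ℝ→ℝ) t) := by
  rw [contDiff_one_iff_deriv]
  constructor
  · exact fun s => ((G_hasDerivAt c s).differentiableAt)
  · have : deriv (fun s => ∫ t in (0:ℝ)..s, (c:ℝ→ℝ) t) = c := funext fun s => (G_hasDerivAt c s).deriv
    rw [this]; exact c.continuous

lemma Wb_contDiff : ContDiff ℝ 1 (Wb c : E → ℝ) :=
  contDiff_const.sub ((G_contDiff c).comp (contDiff_norm_sq ℝ))

lemma Wb_hasFDerivAt (y : E) :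
    HasFDerivAt (Wb c : E → ℝ) (-(c (‖y‖ ^ 2) • (2 • innerSL ℝ y))) y := by
  have hq : HasFDerivAt (fun x : E => ‖x‖ ^ 2) (2 • innerSL ℝ y) y :=
    (hasStrictFDerivAt_norm_sq y).hasFDerivAt
  have hc := (G_hasDerivAt c (‖y‖ ^ 2)).comp_hasFDerivAt y hq
  exact hc.const_sub (∫ t in (0:ℝ)..c.rOut, (c:ℝ→ℝ) t)

lemma Wb_fderiv_apply (y : E) (i : Fin n) :
    fderiv ℝ (Wb c : E → ℝ) y (EuclideanSpace.single i 1) = -(2 * psi c y * y i) := by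
  rw [(Wb_hasFDerivAt c y).fderiv]
  have : (inner ℝ y (EuclideanSpace.single i (1:ℝ)) : ℝ) = y i := by
    rw [EuclideanSpace.inner_single_right]; simp
  simp [psi, this]
  ring

lemma Wb_eq_zero {y : E} (h : c.rOut ≤ ‖y‖ ^ 2) : Wb c y = 0 := by
  have h1 : IntervalIntegrable (c:ℝ→ℝ) volume 0 c.rOut := c.continuous.intervalIntegrable _ _
  have h2 : IntervalIntegrable (c:ℝ→ℝ) volume c.rOut (‖y‖ ^ 2) := c.continuous.intervalIntegrable _ _
  have key : ∫ t in c.rOut..(‖y‖ ^ 2), (c:ℝ→ℝ) t = 0 := by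
    have : Set.EqOn (c:ℝ→ℝ) 0 (Set.uIcc c.rOut (‖y‖ ^ 2)) := by
      intro t ht
      rw [Set.uIcc_of_le h] at ht
      exact c.zero_of_le_dist (by rw [Real.dist_eq, sub_zero]; exact le_trans ht.1 (le_abs_self t))
    rw [intervalIntegral.integral_congr this]
    simp
  have := intervalIntegral.integral_add_adjacent_intervals h1 h2
  rw [key, add_zero] at this
  rw [Wb, this, sub_self]

lemma Wb_supp : HasCompactSupport (Wb c : E → ℝ) := by
  apply HasCompactSupport.intro (isCompact_closedBall (0:E) (max 1 c.rOut))
  intro y hy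
  exact Wb_eq_zero c (sq_big c hy)

end Bump

lemma cont_integrable {f g : E → ℝ} (hf : Continuous f) (hg : Continuous g)
    (hsupp : HasCompactSupport g) : Integrable (fun y : E => f y * g y) :=
  (hf.mul hg).integrable_of_hasCompactSupport hsupp.mul_left

lemma chain_fderiv (x : E) (r : ℝ) (g : E → ℝ) (hg : ContDiff ℝ 1 g) (y v : E) :
    fderiv ℝ (fun y : E => g (x + r • y)) y v = r * fderiv ℝ g (x + r • y) v := by
  have hT : HasFDerivAt (fun y : E => x + r • y)
      (r • ContinuousLinearMap.id ℝ (EuclideanSpace ℝ (Fin n))) y :=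
    ((hasFDerivAt_id y).const_smul r).const_add x
  have h := ((hg.differentiable one_ne_zero) (x + r • y)).hasFDerivAt.comp y hT
  rw [show (fun y : E => g (x + r • y)) = g ∘ (fun y : E => x + r • y) from rfl, h.fderiv]
  simp [ContinuousLinearMap.smul_apply, _root_.map_smul, smul_eq_mul]

lemma D_eq_zero (u : E → ℝ) (hu : ContDiff ℝ 2 u) (hlap : ∀ z, lap u z = 0)
    (c : ContDiffBump (0:ℝ)) (x : E) (r : ℝ) :
    ∫ y : E, (fderiv ℝ u (x + r • y)) y * psi c y = 0 := by
  have hT : ContDiff ℝ 1 (fun y : E => x + r • y) :=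
    contDiff_const.add (contDiff_id.const_smul r)
  have hA : ∀ i : Fin n, ContDiff ℝ 1 (fun z : E => fderiv ℝ u z (EuclideanSpace.single i 1)) :=
    fun i => (hu.fderiv_right (by norm_num)).clm_apply contDiff_const
  have hAT : ∀ i : Fin n,
      ContDiff ℝ 1 (fun y : E => fderiv ℝ u (x + r • y) (EuclideanSpace.single i 1)) :=
    fun i => (hA i).comp hT
  set F : Fin n → E → ℝ :=
    fun i y => fderiv ℝ u (x + r • y) (EuclideanSpace.single i 1) * Wb c y with hFdef
  have hFi : ∀ i, ContDiff ℝ 1 (F i) := fun i => (hAT i).mul (Wb_contDiff c)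
  have hFis : ∀ i, HasCompactSupport (F i) := fun i => (Wb_supp c).mul_left
  have hzero : ∀ i : Fin n, ∫ y : E, fderiv ℝ (F i) y (EuclideanSpace.single i 1) = 0 :=
    fun i => integral_fderiv_eq_zero (F i) (hFi i) (hFis i) _
  -- pointwise formula
  have hpt : ∀ (i : Fin n) (y : E), fderiv ℝ (F i) y (EuclideanSpace.single i 1)
      = (r * fderiv ℝ (fun z => fderiv ℝ u z (EuclideanSpace.single i 1)) (x + r • y)
          (EuclideanSpace.single i 1)) * Wb c y
        + fderiv ℝ u (x + r • y) (EuclideanSpace.single i 1) * -(2 * psi c y * y i) := by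
    intro i y
    have hd1 : DifferentiableAt ℝ
        (fun y : E => fderiv ℝ u (x + r • y) (EuclideanSpace.single i 1)) y :=
      ((hAT i).differentiable one_ne_zero) y
    have hd2 : DifferentiableAt ℝ (Wb c : E → ℝ) y := ((Wb_contDiff c).differentiable one_ne_zero) y
    rw [show F i = (fun y : E => fderiv ℝ u (x + r • y) (EuclideanSpace.single i 1)) * Wb c from rfl,
      fderiv_mul hd1 hd2]
    rw [ContinuousLinearMap.add_apply, ContinuousLinearMap.smul_apply,
      ContinuousLinearMap.smul_apply, Wb_fderiv_apply, chain_fderiv x r _ (hA i)]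
    simp only [smul_eq_mul]
    ring
  -- integrability of each piece
  have hint : ∀ i : Fin n,
      Integrable (fun y : E => fderiv ℝ (F i) y (EuclideanSpace.single i 1)) := fun i =>
    (((hFi i).continuous_fderiv one_ne_zero).clm_apply continuous_const).integrable_of_hasCompactSupport
      ((hFis i).fderiv_apply ℝ _)
  have hsum : ∫ y : E, ∑ i : Fin n, fderiv ℝ (F i) y (EuclideanSpace.single i 1) = 0 := by
    rw [integral_finset_sum _ (fun i _ => hint i)]
    exact Finset.sum_eq_zero fun i _ => hzero i
  -- pointwise: the sum equals -2 * (fderiv u (x+r•y) y * psi c y)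
  have hptsum : ∀ y : E, ∑ i : Fin n, fderiv ℝ (F i) y (EuclideanSpace.single i 1)
      = -2 * ((fderiv ℝ u (x + r • y)) y * psi c y) := by
    intro y
    have e1 : ∀ i : Fin n, fderiv ℝ (F i) y (EuclideanSpace.single i 1)
        = (r * fderiv ℝ (fun z => fderiv ℝ u z (EuclideanSpace.single i 1)) (x + r • y)
            (EuclideanSpace.single i 1)) * Wb c y
          + fderiv ℝ u (x + r • y) (EuclideanSpace.single i 1) * -(2 * psi c y * y i) :=
      fun i => hpt i y
    rw [Finset.sum_congr rfl (fun i _ => e1 i), Finset.sum_add_distrib]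
    have h2 : ∑ i : Fin n, (r * fderiv ℝ (fun z => fderiv ℝ u z (EuclideanSpace.single i 1))
        (x + r • y) (EuclideanSpace.single i 1)) * Wb c y
        = (r * Wb c y) * lap u (x + r • y) := by
      rw [lap, Finset.mul_sum]
      exact Finset.sum_congr rfl fun i _ => by ring
    rw [h2, hlap, mul_zero, zero_add]
    have h3 : (fderiv ℝ u (x + r • y)) y
        = ∑ i : Fin n, y i * fderiv ℝ u (x + r • y) (EuclideanSpace.single i 1) :=
      clm_apply_eq_sum _ y
    rw [h3, Finset.sum_mul, Finset.mul_sum]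
    exact Finset.sum_congr rfl fun i _ => by ring
  have : ∫ y : E, (-2 : ℝ) * ((fderiv ℝ u (x + r • y)) y * psi c y) = 0 := by
    rw [← hsum]
    exact integral_congr_ae (Filter.Eventually.of_forall fun y => (hptsum y).symm)
  rw [integral_const_mul] at this
  linarith

/-- The key identity: the derivative in `r` of `∫ u(x + r y) ψ(y) dy` vanishes. -/
lemma key_deriv_zero (u : E → ℝ) (hu : ContDiff ℝ 2 u) (hlap : ∀ z, lap u z = 0)
    (c : ContDiffBump (0:ℝ)) (x : E) (r : ℝ) :
    HasDerivAt (fun s => ∫ y : E, u (x + s • y) * psi c y) 0 r := by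
  have hcont_u : Continuous u := hu.continuous
  have hcont_f : Continuous (fderiv ℝ u) := hu.continuous_fderiv (by norm_num)
  set Rc : ℝ := max 1 c.rOut with hRc
  set K : Set E := closedBall (0:E) Rc with hK
  have hKc : IsCompact K := isCompact_closedBall _ _
  -- compact set of relevant points
  set Q : Set E := (fun p : ℝ × E => x + p.1 • p.2) '' ((closedBall r 1) ×ˢ K) with hQ
  have hQc : IsCompact Q := ((isCompact_closedBall r 1).prod hKc).image (by fun_prop)
  obtain ⟨M, hM⟩ := hQc.exists_bound_of_continuousOn hcont_f.continuousOn
  have hxQ : x + r • (0:E) ∈ Q := ⟨(r, 0), ⟨mem_closedBall_self one_pos.le, mem_closedBall_self (by positivity)⟩, rfl⟩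
  have hM0 : 0 ≤ M := le_trans (norm_nonneg _) (hM _ hxQ)
  have hRc0 : 0 < Rc := lt_of_lt_of_le one_pos (le_max_left _ _)
  set bound : E → ℝ := K.indicator (fun _ => M * Rc) with hbound
  have key := hasDerivAt_integral_of_dominated_loc_of_deriv_le (μ := volume)
    (F := fun s (y : E) => u (x + s • y) * psi c y)
    (F' := fun s (y : E) => (fderiv ℝ u (x + s • y)) y * psi c y)
    (x₀ := r) (bound := bound) (ball_mem_nhds r one_pos)
    ?_ ?_ ?_ ?_ ?_ ?_
  · have hD := D_eq_zero u hu hlap c x r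
    rw [hD] at key
    exact key.2
  · filter_upwards with s
    exact ((hcont_u.comp (continuous_const.add (continuous_id.const_smul s))).mul
      (psi_continuous c)).aestronglyMeasurable
  · exact cont_integrable (hcont_u.comp (continuous_const.add (continuous_id.const_smul r)))
      (psi_continuous c) (psi_supp c)
  · exact (((hcont_f.comp (continuous_const.add (continuous_id.const_smul r))).clm_apply
      continuous_id).mul (psi_continuous c)).aestronglyMeasurable
  · filter_upwards with y
    intro s hs
    by_cases hy : y ∈ K
    · have hyQ : x + s • y ∈ Q := ⟨(s, y), ⟨ball_subset_closedBall hs, hy⟩, rfl⟩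
      have hynorm : ‖y‖ ≤ Rc := mem_closedBall_zero_iff.mp hy
      have h1 : ‖(fderiv ℝ u (x + s • y)) y * psi c y‖
          ≤ ‖(fderiv ℝ u (x + s • y)) y‖ * 1 := by
        rw [norm_mul]
        exact mul_le_mul_of_nonneg_left (by
          rw [Real.norm_eq_abs, abs_of_nonneg (psi_nonneg c y)]; exact psi_le_one c y)
          (norm_nonneg _)
      have h2 : ‖(fderiv ℝ u (x + s • y)) y‖ ≤ M * Rc := by
        calc ‖(fderiv ℝ u (x + s • y)) y‖ ≤ ‖fderiv ℝ u (x + s • y)‖ * ‖y‖ :=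
              ContinuousLinearMap.le_opNorm _ _
        _ ≤ M * Rc := mul_le_mul (hM _ hyQ) hynorm (norm_nonneg _) hM0
      rw [hbound, Set.indicator_of_mem hy]
      exact le_trans h1 (by simpa using h2)
    · have hpsi0 : psi c y = 0 := psi_eq_zero c (sq_big c hy)
      rw [hbound, Set.indicator_of_notMem hy, hpsi0, mul_zero, norm_zero]
  · rw [hbound, integrable_indicator_iff hKc.measurableSet]
    exact integrableOn_const hKc.measure_lt_top.ne
  · filter_upwards with y
    intro s hs
    have hline : HasDerivAt (fun s : ℝ => x + s • y) y s := by
      simpa using ((hasDerivAt_id s).smul_const y).const_add x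
    have := ((hu.differentiable (by norm_num) (x + s • y)).hasFDerivAt.comp_hasDerivAt s hline)
    exact this.mul_const (psi c y)

lemma mvp (u : E → ℝ) (hu : ContDiff ℝ 2 u) (hlap : ∀ z, lap u z = 0)
    (c : ContDiffBump (0:ℝ)) (x : E) (r : ℝ) :
    ∫ y : E, u (x + r • y) * psi c y = (∫ y : E, psi c y) * u x := by
  have h0 : ∀ s, HasDerivAt (fun s => ∫ y : E, u (x + s • y) * psi c y) 0 s :=
    fun s => key_deriv_zero u hu hlap c x s
  have hconst : (∫ y : E, u (x + r • y) * psi c y) = ∫ y : E, u (x + (0:ℝ) • y) * psi c y :=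
    is_const_of_deriv_eq_zero (fun s => (h0 s).differentiableAt) (fun s => (h0 s).deriv) r 0
  rw [hconst]
  simp only [zero_smul, add_zero]
  rw [← integral_mul_const]
  congr 1 with y
  ring

noncomputable def cb1 : ContDiffBump (0:ℝ) := ⟨1, 4, one_pos, by norm_num⟩
noncomputable def cb2 : ContDiffBump (0:ℝ) := ⟨9, 10, by norm_num, by norm_num⟩

lemma cb1_rIn : cb1.rIn = 1 := rfl
lemma cb1_rOut : cb1.rOut = 4 := rfl
lemma cb2_rIn : cb2.rIn = 9 := rfl

end LiouvilleHarmonic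

/-- Liouville: a positive harmonic function on all of ℝⁿ is constant. -/
theorem positive_harmonic_is_constant (n : ℕ) (hn : 1 ≤ n)
    (u : EuclideanSpace ℝ (Fin n) → ℝ) (hu : HarmonicOn u Set.univ)
    (hpos : ∀ x, 0 < u x) :
    ∃ c : ℝ, ∀ x, u x = c := by
  classical
  open LiouvilleHarmonic in
  obtain ⟨hreg, hlap0⟩ := hu
  have hu2 : ContDiff ℝ 2 u := contDiffOn_univ.mp hreg
  have hlap : ∀ z, lap u z = 0 := fun z => hlap0 z (Set.mem_univ z)
  obtain ⟨L, hL⟩ := (psi_contDiff (n := n) cb1).lipschitzWith_of_hasCompactSupport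
    (psi_supp cb1) one_ne_zero
  have hcont_u : Continuous u := hu2.continuous
  -- positive mass of psi cb1
  have hmass1 : 0 < ∫ y : EuclideanSpace ℝ (Fin n), psi cb1 y := by
    have hint1 : Integrable (psi cb1 : EuclideanSpace ℝ (Fin n) → ℝ) :=
      (psi_continuous cb1).integrable_of_hasCompactSupport (psi_supp cb1)
    have hb : ∫ y in ball (0 : EuclideanSpace ℝ (Fin n)) 1, psi cb1 y
        = (volume (ball (0 : EuclideanSpace ℝ (Fin n)) 1)).toReal := by
      rw [setIntegral_congr_fun measurableSet_ball (g := fun _ => (1:ℝ))]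
      · simp [Measure.real]
      · intro y hy
        apply psi_eq_one
        rw [cb1_rIn]
        have h1 : ‖y‖ < 1 := mem_ball_zero_iff.mp hy
        nlinarith [norm_nonneg y]
    have hpos' : 0 < (volume (ball (0 : EuclideanSpace ℝ (Fin n)) 1)).toReal :=
      ENNReal.toReal_pos (measure_ball_pos volume _ one_pos).ne' measure_ball_lt_top.ne
    calc (0:ℝ) < (volume (ball (0 : EuclideanSpace ℝ (Fin n)) 1)).toReal := hpos'
    _ = ∫ y in ball (0 : EuclideanSpace ℝ (Fin n)) 1, psi cb1 y := hb.symm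
    _ ≤ ∫ y, psi cb1 y := setIntegral_le_integral hint1
        (Filter.Eventually.of_forall (psi_nonneg cb1))
  have claim : ∀ x x' : EuclideanSpace ℝ (Fin n), u x = u x' := by
    intro x x'
    set d : ℝ := ‖x' - x‖ with hd
    set A : ℝ := ∫ y : EuclideanSpace ℝ (Fin n), psi cb1 y with hA
    set B2 : ℝ := ∫ y : EuclideanSpace ℝ (Fin n), psi cb2 y with hB2
    have key : ∀ R : ℝ, max 1 d ≤ R →
        A * |u x - u x'| ≤ ((L : ℝ) * d * (B2 * u x)) / R := by
      intro R hR
      have hR1 : (1:ℝ) ≤ R := le_trans (le_max_left _ _) hR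
      have hR0 : (0:ℝ) < R := lt_of_lt_of_le one_pos hR1
      have hdR : d ≤ R := le_trans (le_max_right _ _) hR
      set w : EuclideanSpace ℝ (Fin n) := R⁻¹ • (x' - x) with hw
      have hwnorm : ‖w‖ = d / R := by
        rw [hw, norm_smul, norm_inv, Real.norm_eq_abs, abs_of_pos hR0, ← hd]
        ring
      have hw1 : ‖w‖ ≤ 1 := by rw [hwnorm]; exact (div_le_one hR0).mpr hdR
      have compcont : Continuous (fun z : EuclideanSpace ℝ (Fin n) => u (x + R • z)) :=
        hcont_u.comp (continuous_const.add (continuous_id.const_smul R))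
      have eq1 : ∫ z, u (x + R • z) * psi cb1 z = A * u x := mvp u hu2 hlap cb1 x R
      have eq3 : ∫ z, u (x + R • z) * psi cb2 z = B2 * u x := mvp u hu2 hlap cb2 x R
      have eq2 : ∫ z, u (x + R • z) * psi cb1 (z - w) = A * u x' := by
        have h0 := mvp u hu2 hlap cb1 x' R
        rw [← integral_sub_right_eq_self
          (fun y : EuclideanSpace ℝ (Fin n) => u (x' + R • y) * psi cb1 y) w] at h0
        rw [← h0]
        apply integral_congr_ae
        filter_upwards with z
        have : x' + R • (z - w) = x + R • z := by
          rw [smul_sub, hw, smul_inv_smul₀ hR0.ne']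
          abel
        rw [this]
      have hptw : ∀ z : EuclideanSpace ℝ (Fin n),
          |psi cb1 z - psi cb1 (z - w)| ≤ ((L : ℝ) * ‖w‖) * psi cb2 z := by
        intro z
        by_cases hz : ‖z‖ ≤ 3
        · have h2 : psi cb2 z = 1 := psi_eq_one cb2 (by rw [cb2_rIn]; nlinarith [norm_nonneg z])
          rw [h2, mul_one]
          have h3 := hL.dist_le_mul z (z - w)
          rw [Real.dist_eq, dist_eq_norm, sub_sub_cancel] at h3
          exact h3
        · push_neg at hz
          have hz1 : psi cb1 z = 0 := psi_eq_zero cb1 (by rw [cb1_rOut]; nlinarith)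
          have hz2 : psi cb1 (z - w) = 0 := by
            apply psi_eq_zero cb1
            rw [cb1_rOut]
            have h4 : ‖z‖ - ‖w‖ ≤ ‖z - w‖ := norm_sub_norm_le z w
            nlinarith [norm_nonneg (z - w)]
          rw [hz1, hz2, sub_zero, abs_zero]
          exact mul_nonneg (by positivity) (psi_nonneg cb2 z)
      have hintL : Integrable (fun z => u (x + R • z) * psi cb1 z) :=
        cont_integrable compcont (psi_continuous cb1) (psi_supp cb1)
      have hsupp' : HasCompactSupport (fun z : EuclideanSpace ℝ (Fin n) => psi cb1 (z - w)) :=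
        (psi_supp cb1).comp_homeomorph (Homeomorph.subRight w)
      have hintR : Integrable (fun z => u (x + R • z) * psi cb1 (z - w)) :=
        cont_integrable compcont ((psi_continuous cb1).comp (continuous_sub_right w)) hsupp'
      have hint2' : Integrable
          (fun z => u (x + R • z) * (((L : ℝ) * ‖w‖) * psi cb2 z)) :=
        cont_integrable compcont (continuous_const.mul (psi_continuous cb2))
          (psi_supp cb2).mul_left
      set f0 : EuclideanSpace ℝ (Fin n) → ℝ :=
        fun z => u (x + R • z) * (psi cb1 z - psi cb1 (z - w)) with hf0def
      have hf0 : Integrable f0 := by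
        refine (hintL.sub hintR).congr (Filter.Eventually.of_forall fun z => ?_)
        simp only [Pi.sub_apply, hf0def]
        ring
      have hsub : A * (u x - u x') = ∫ z, f0 z := by
        rw [mul_sub, ← eq1, ← eq2, ← integral_sub hintL hintR]
        apply integral_congr_ae
        filter_upwards with z
        simp only [Pi.sub_apply, hf0def]
        ring
      have habs : |A * (u x - u x')|
          ≤ ∫ z, u (x + R • z) * (((L : ℝ) * ‖w‖) * psi cb2 z) := by
        rw [hsub]
        have habs0 : |∫ z, f0 z| ≤ ∫ z, |f0 z| := by
          simpa [Real.norm_eq_abs] using norm_integral_le_integral_norm (μ := volume) f0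
        refine le_trans habs0 (integral_mono hf0.abs hint2' ?_)
        intro z
        simp only [hf0def]
        rw [abs_mul, abs_of_pos (hpos _)]
        exact mul_le_mul_of_nonneg_left (hptw z) (hpos (x + R • z)).le
      have hval : ∫ z, u (x + R • z) * (((L : ℝ) * ‖w‖) * psi cb2 z)
          = ((L : ℝ) * ‖w‖) * (B2 * u x) := by
        have h6 : (fun z : EuclideanSpace ℝ (Fin n)
            => u (x + R • z) * (((L : ℝ) * ‖w‖) * psi cb2 z))
            = fun z => ((L : ℝ) * ‖w‖) * (u (x + R • z) * psi cb2 z) := by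
          funext z; ring
        rw [h6, integral_const_mul, eq3]
      have hfin : A * |u x - u x'| = |A * (u x - u x')| := by
        rw [abs_mul, abs_of_pos hmass1]
      rw [hfin]
      calc |A * (u x - u x')| ≤ ((L : ℝ) * ‖w‖) * (B2 * u x) := le_of_le_of_eq habs hval
      _ = ((L : ℝ) * d * (B2 * u x)) / R := by rw [hwnorm]; ring
    -- limit R → ∞
    have hC : Filter.Tendsto (fun R : ℝ => ((L : ℝ) * d * (B2 * u x)) / R)
        Filter.atTop (nhds 0) := Filter.Tendsto.div_atTop tendsto_const_nhds Filter.tendsto_id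
    have h0 : A * |u x - u x'| ≤ 0 := by
      refine ge_of_tendsto hC ?_
      filter_upwards [Filter.eventually_ge_atTop (max 1 d)] with R hR
      exact key R hR
    have h1 : |u x - u x'| ≤ 0 := by
      by_contra h
      push_neg at h
      nlinarith
    have : u x - u x' = 0 := abs_eq_zero.mp (le_antisymm h1 (abs_nonneg _))
    linarith
  exact ⟨u 0, fun x => claim x 0⟩
end

section
/- Reverse Poincaré (Caccioppoli) inequality: if u is harmonic on the open ball B_{2R}(x₀) ⊂ ℝⁿ, then ∫_{B_R(x₀)} |∇u|² dx ≤ (4/R²) · ∫_{B_{2R}(x₀)} u² dx. -/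
open Metric MeasureTheory
open intervalIntegral
open scoped NNReal ENNReal

-- component identity for gradients
lemma grad_sq_eq {n : ℕ} (f : EuclideanSpace ℝ (Fin n) → ℝ) (x : EuclideanSpace ℝ (Fin n)) :
    ‖gradient f x‖^2 = ∑ i : Fin n, (fderiv ℝ f x (EuclideanSpace.single i 1))^2 := by
  have hcomp : ∀ i : Fin n, gradient f x i = fderiv ℝ f x (EuclideanSpace.single i 1) := by
    intro i
    have h1 : (inner ℝ (gradient f x) (EuclideanSpace.single i (1:ℝ)) : ℝ)
        = fderiv ℝ f x (EuclideanSpace.single i 1) := by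
      rw [gradient, InnerProductSpace.toDual_symm_apply]
    rw [← h1, EuclideanSpace.inner_single_right]
    simp
  rw [EuclideanSpace.norm_eq, Real.sq_sqrt (by positivity)]
  exact Finset.sum_congr rfl fun i _ => by rw [Real.norm_eq_abs, sq_abs, hcomp i]

lemma grad_norm_eq {n : ℕ} (f : EuclideanSpace ℝ (Fin n) → ℝ) (x : EuclideanSpace ℝ (Fin n)) :
    ‖gradient f x‖ = ‖fderiv ℝ f x‖ := by
  rw [gradient, LinearIsometryEquiv.norm_map]

lemma key {n : ℕ} (u : EuclideanSpace ℝ (Fin n) → ℝ) (x₀ : EuclideanSpace ℝ (Fin n))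
    (R q : ℝ) (hR : 0 < R) (hRq : R < q) (hq : q < 2*R)
    (hu : HarmonicOn u (ball x₀ (2*R)))
    (η : EuclideanSpace ℝ (Fin n) → ℝ) (hη : ContDiff ℝ 1 η)
    (hη1 : ∀ x : EuclideanSpace ℝ (Fin n), dist x x₀ ≤ R → η x = 1)
    (hη0 : ∀ x : EuclideanSpace ℝ (Fin n), q ≤ dist x x₀ → η x = 0)
    (L : ℝ≥0) (hηL : LipschitzWith L η) :
    ∫⁻ x in ball x₀ R, ENNReal.ofReal (‖gradient u x‖ ^ 2) ≤
      ENNReal.ofReal (4 * (L:ℝ)^2) * ∫⁻ x in ball x₀ (2*R), ENNReal.ofReal ((u x)^2) := by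
  -- E := EuclideanSpace ℝ (Fin n)
  set e : Fin n → EuclideanSpace ℝ (Fin n) := fun i => EuclideanSpace.single i 1 with he
  -- the outer bump ζ
  set rIn : ℝ := q + (2*R - q)/3 with hrIn
  set rOut : ℝ := q + 2*(2*R - q)/3 with hrOut
  have hqrIn : q < rIn := by rw [hrIn]; linarith
  have hrIn2R : rIn < 2*R := by rw [hrIn]; linarith
  have hrOut2R : rOut < 2*R := by rw [hrOut]; linarith
  set ζ : ContDiffBump x₀ := ⟨rIn, rOut, by linarith, by rw [hrIn, hrOut]; linarith⟩ with hζ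
  set w : EuclideanSpace ℝ (Fin n) → ℝ := fun x => ζ x * u x with hw
  -- basic properties of η
  have hsuppη : Function.support η ⊆ closedBall x₀ q := by
    intro x hx
    rw [mem_closedBall]
    by_contra h
    exact hx (hη0 x (le_of_lt (not_le.1 h)))
  have hηc : HasCompactSupport η :=
    HasCompactSupport.intro (isCompact_closedBall x₀ q) fun x hx =>
      Function.notMem_support.1 fun hs => hx (hsuppη hs)
  have hηsupp : tsupport η ⊆ closedBall x₀ q :=
    closure_minimal hsuppη Metric.isClosed_closedBall
  have hζsupp : tsupport ζ ⊆ ball x₀ (2*R) := by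
    rw [ζ.tsupport_eq]
    exact closedBall_subset_ball hrOut2R
  -- w is C²
  have hw2 : ContDiff ℝ 2 w := by
    rw [contDiff_iff_contDiffAt]
    intro x
    by_cases hx : x ∈ ball x₀ (2*R)
    · exact ζ.contDiffAt.mul ((hu.1.contDiffAt (Metric.isOpen_ball.mem_nhds hx)))
    · have hopen : IsOpen (tsupport ζ)ᶜ := (isClosed_tsupport ζ).isOpen_compl
      have hxmem : x ∈ (tsupport ζ)ᶜ := fun hc => hx (hζsupp hc)
      apply (contDiffAt_const (c := (0:ℝ))).congr_of_eventuallyEq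
      filter_upwards [hopen.mem_nhds hxmem] with y hy
      have : ζ y = 0 := image_eq_zero_of_notMem_tsupport hy
      simp [hw, this]
  have hwc : HasCompactSupport w := by
    apply HasCompactSupport.intro (isCompact_closedBall x₀ rOut)
    intro x hx
    have : ζ x = 0 := ζ.zero_of_le_dist (le_of_lt (by simpa [mem_closedBall] using hx))
    simp [hw, this]
  have hwu : ∀ x ∈ ball x₀ rIn, w x = u x := by
    intro x hx
    have : ζ x = 1 := ζ.one_of_mem_closedBall (ball_subset_closedBall hx)
    simp [hw, this]
  have hwu' : ∀ x ∈ ball x₀ rIn, w =ᶠ[nhds x] u := fun x hx =>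
    Filter.eventuallyEq_of_mem (Metric.isOpen_ball.mem_nhds hx) hwu
  have hfd : ∀ x ∈ ball x₀ rIn, fderiv ℝ w x = fderiv ℝ u x := fun x hx =>
    (hwu' x hx).fderiv_eq
  have hballs : ball x₀ rIn ⊆ ball x₀ (2*R) := ball_subset_ball hrIn2R.le
  have hlap : ∀ x ∈ ball x₀ rIn, lap w x = 0 := by
    intro x hx
    have h2 : ∀ i : Fin n, fderiv ℝ (fun y => fderiv ℝ w y (e i)) x (e i)
        = fderiv ℝ (fun y => fderiv ℝ u y (e i)) x (e i) := by
      intro i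
      have : (fun y => fderiv ℝ w y (e i)) =ᶠ[nhds x] (fun y => fderiv ℝ u y (e i)) := by
        filter_upwards [Metric.isOpen_ball.mem_nhds hx] with y hy
        rw [hfd y hy]
      rw [this.fderiv_eq]
    have : lap w x = lap u x := Finset.sum_congr rfl fun i _ => h2 i
    rw [this]
    exact hu.2 x (hballs hx)
  -- partial derivatives of w
  set W : Fin n → EuclideanSpace ℝ (Fin n) → ℝ := fun i x => fderiv ℝ w x (e i) with hWdef
  have hWc1 : ∀ i, ContDiff ℝ 1 (W i) := by
    intro i
    exact (ContinuousLinearMap.apply ℝ ℝ (e i)).contDiff.comp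
      (hw2.fderiv_right (m := 1) (by norm_num))
  have hwd : Differentiable ℝ w := hw2.differentiable (by norm_num)
  have hηd : Differentiable ℝ η := hη.differentiable (by norm_num)
  have hWd : ∀ i, Differentiable ℝ (W i) := fun i => (hWc1 i).differentiable (by norm_num)
  -- zero outside the ball
  have hzero : ∀ x : EuclideanSpace ℝ (Fin n), x ∉ closedBall x₀ q →
      η x = 0 ∧ fderiv ℝ η x = 0 := by
    intro x hx
    refine ⟨hη0 x (le_of_lt (by simpa [mem_closedBall] using hx)), ?_⟩
    have : x ∉ tsupport η := fun hc => hx (hηsupp hc)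
    by_contra h
    exact this (support_fderiv_subset ℝ (Function.mem_support.2 h))
  -- derivative of η² Wi
  have hfval : ∀ (i : Fin n) (x : EuclideanSpace ℝ (Fin n)),
      fderiv ℝ (fun y => η y * η y * W i y) x (e i)
      = (2 * η x * fderiv ℝ η x (e i)) * W i x + (η x * η x) * fderiv ℝ (W i) x (e i) := by
    intro i x
    rw [fderiv_fun_mul (by fun_prop) (by fun_prop), fderiv_fun_mul (by fun_prop) (by fun_prop)]
    simp only [ContinuousLinearMap.add_apply, ContinuousLinearMap.smul_apply, smul_eq_mul]
    ring
  -- continuity facts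
  have hηcont : Continuous η := hη.continuous
  have hη'cont : ∀ i : Fin n, Continuous (fun x => fderiv ℝ η x (e i)) := fun i =>
    (ContinuousLinearMap.apply ℝ ℝ (e i)).continuous.comp (hη.continuous_fderiv (by norm_num))
  have hWcont : ∀ i, Continuous (W i) := fun i => (hWc1 i).continuous
  have hW'cont : ∀ i : Fin n, Continuous (fun x => fderiv ℝ (W i) x (e i)) := fun i =>
    (ContinuousLinearMap.apply ℝ ℝ (e i)).continuous.comp ((hWc1 i).continuous_fderiv (by norm_num))
  have hwcont : Continuous w := hw2.continuous
  -- integrability helper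
  have hintg : ∀ g : EuclideanSpace ℝ (Fin n) → ℝ, Continuous g →
      (∀ x : EuclideanSpace ℝ (Fin n), x ∉ closedBall x₀ q → g x = 0) → Integrable g := by
    intro g hg hg0
    exact hg.integrable_of_hasCompactSupport
      (HasCompactSupport.intro (isCompact_closedBall x₀ q) hg0)
  -- integration by parts in direction i
  have IBP : ∀ i : Fin n, ∫ x, (η x * η x * W i x) * W i x
      = - ∫ x, ((2 * η x * fderiv ℝ η x (e i)) * W i x
          + (η x * η x) * fderiv ℝ (W i) x (e i)) * w x := by
    intro i
    have h1 : Integrable (fun x => fderiv ℝ (fun y => η y * η y * W i y) x (e i) * w x) := by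
      apply hintg _ ?_ ?_
      · have : Continuous (fun x => fderiv ℝ (fun y => η y * η y * W i y) x (e i)) := by
          have hc1 : ContDiff ℝ 1 (fun y => η y * η y * W i y) :=
            (hη.mul hη).mul (hWc1 i)
          exact (ContinuousLinearMap.apply ℝ ℝ (e i)).continuous.comp
            (hc1.continuous_fderiv (by norm_num))
        fun_prop
      · intro x hx
        rw [hfval i x, (hzero x hx).1, (hzero x hx).2]
        simp
    have h2 : Integrable (fun x => (η x * η x * W i x) * fderiv ℝ w x (e i)) := by
      apply hintg _ (((hηcont.mul hηcont).mul (hWcont i)).mul (hWcont i)) ?_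
      intro x hx
      simp only [Pi.mul_apply, Pi.add_apply, Pi.pow_apply]
      rw [(hzero x hx).1]; ring
    have h3 : Integrable (fun x => (η x * η x * W i x) * w x) := by
      apply hintg _ (by fun_prop) ?_
      intro x hx
      rw [(hzero x hx).1]; ring
    have := integral_mul_fderiv_eq_neg_fderiv_mul_of_integrable h1 h2 h3
      (fun x _ => ((hηd.mul hηd).mul (hWd i)) x) (fun x _ => hwd x)
    calc ∫ x, (η x * η x * W i x) * W i x
        = ∫ x, (η x * η x * W i x) * fderiv ℝ w x (e i) := rfl
      _ = - ∫ x, fderiv ℝ (fun y => η y * η y * W i y) x (e i) * w x := this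
      _ = - ∫ x, ((2 * η x * fderiv ℝ η x (e i)) * W i x
          + (η x * η x) * fderiv ℝ (W i) x (e i)) * w x := by
          congr 1
          refine integral_congr_ae (Filter.Eventually.of_forall fun x => ?_)
          simp only [hfval i]
  -- the two key quantities
  set P : EuclideanSpace ℝ (Fin n) → ℝ := fun x => ∑ i, fderiv ℝ η x (e i) * W i x with hP
  set G : EuclideanSpace ℝ (Fin n) → ℝ := fun x => ∑ i, (fderiv ℝ η x (e i))^2 with hG
  set X : ℝ := ∫ x, (η x * η x) * ∑ i, (W i x)^2 with hX
  set Y : ℝ := ∫ x, (w x)^2 * G x with hY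
  have hPcont : Continuous P := continuous_finset_sum _ fun i _ => (hη'cont i).mul (hWcont i)
  have hGcont : Continuous G := continuous_finset_sum _ fun i _ => (hη'cont i).pow 2
  have hsumWcont : Continuous (fun x => ∑ i, (W i x)^2) :=
    continuous_finset_sum _ fun i _ => (hWcont i).pow 2
  have hXint : Integrable (fun x => (η x * η x) * ∑ i, (W i x)^2) := by
    apply hintg _ ((hηcont.mul hηcont).mul hsumWcont) ?_
    intro x hx
    simp only [Pi.mul_apply, Pi.add_apply, Pi.pow_apply]
    rw [(hzero x hx).1]; ring
  have hYint : Integrable (fun x => (w x)^2 * G x) := by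
    apply hintg _ ((hwcont.pow 2).mul hGcont) ?_
    intro x hx
    have : G x = 0 := by
      rw [hG]
      refine Finset.sum_eq_zero fun i _ => ?_
      rw [(hzero x hx).2]
      simp
    simp only [Pi.mul_apply, Pi.add_apply, Pi.pow_apply]
    rw [this]; ring
  have hPint : Integrable (fun x => 2 * η x * w x * P x) := by
    apply hintg _ (by fun_prop) ?_
    intro x hx
    rw [(hzero x hx).1]; ring
  -- X as a sum of IBP identities
  have hXeq : X = -∫ x, 2 * η x * w x * P x := by
    have h1 : X = ∑ i, ∫ x, (η x * η x * W i x) * W i x := by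
      rw [hX, ← MeasureTheory.integral_finset_sum]
      · refine integral_congr_ae (Filter.Eventually.of_forall fun x => ?_)
        simp only [Finset.mul_sum]
        exact Finset.sum_congr rfl fun i _ => by ring
      · intro i _
        apply hintg _ (((hηcont.mul hηcont).mul (hWcont i)).mul (hWcont i)) ?_
        intro x hx
        simp only [Pi.mul_apply, Pi.add_apply, Pi.pow_apply]
        rw [(hzero x hx).1]; ring
    have h2 : ∀ i : Fin n, Integrable (fun x =>
        ((2 * η x * fderiv ℝ η x (e i)) * W i x
          + (η x * η x) * fderiv ℝ (W i) x (e i)) * w x) := by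
      intro i
      apply hintg _ (by
        apply Continuous.mul ?_ hwcont
        exact (((continuous_const.mul hηcont).mul (hη'cont i)).mul (hWcont i)).add
          ((hηcont.mul hηcont).mul (hW'cont i))) ?_
      intro x hx
      rw [(hzero x hx).1, (hzero x hx).2]
      simp
    have h3 : X = -∑ i, ∫ x, ((2 * η x * fderiv ℝ η x (e i)) * W i x
        + (η x * η x) * fderiv ℝ (W i) x (e i)) * w x := by
      rw [h1, ← Finset.sum_neg_distrib]
      exact Finset.sum_congr rfl fun i _ => IBP i
    rw [h3, ← MeasureTheory.integral_finset_sum _ fun i _ => h2 i]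
    congr 1
    refine integral_congr_ae (Filter.Eventually.of_forall fun x => ?_)
    have hlapx : (η x * η x) * w x * lap w x = 0 := by
      by_cases hx : x ∈ ball x₀ rIn
      · rw [hlap x hx]; ring
      · have : η x = 0 := by
          apply hη0
          have := mem_ball.not.1 hx
          push_neg at this
          linarith [this]
        rw [this]; ring
    have hl : lap w x = ∑ i, fderiv ℝ (W i) x (e i) := rfl
    have : ∑ i, ((2 * η x * fderiv ℝ η x (e i)) * W i x
        + (η x * η x) * fderiv ℝ (W i) x (e i)) * w x
        = 2 * η x * w x * P x + (η x * η x) * w x * lap w x := by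
      rw [hl, hP, Finset.mul_sum, Finset.mul_sum, ← Finset.sum_add_distrib]
      exact Finset.sum_congr rfl fun i _ => by ring
    simp only [this, hlapx, add_zero]
  -- Young's inequality pointwise and the bound X ≤ 4 Y
  have hX4Y : X ≤ 4 * Y := by
    have hmono : X ≤ (1/2) * X + 2 * Y := by
      have hpt : ∀ x : EuclideanSpace ℝ (Fin n), -(2 * η x * w x * P x)
          ≤ (1/2) * ((η x * η x) * ∑ i, (W i x)^2) + 2 * ((w x)^2 * G x) := by
        intro x
        have : -(2 * η x * w x * P x) = ∑ i, -(2 * (η x * W i x) * (w x * fderiv ℝ η x (e i))) := by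
          rw [hP, Finset.mul_sum, ← Finset.sum_neg_distrib]
          exact Finset.sum_congr rfl fun i _ => by ring
        rw [this, hG]
        simp only [Finset.mul_sum, ← Finset.sum_add_distrib]
        refine Finset.sum_le_sum fun i _ => ?_
        nlinarith [sq_nonneg (η x * W i x + 2 * w x * fderiv ℝ η x (e i))]
      have : X ≤ ∫ x, ((1/2) * ((η x * η x) * ∑ i, (W i x)^2) + 2 * ((w x)^2 * G x)) := by
        rw [hXeq, ← MeasureTheory.integral_neg]
        exact integral_mono hPint.neg ((hXint.const_mul _).add (hYint.const_mul _))
          (fun x => hpt x)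
      rwa [integral_add (hXint.const_mul _) (hYint.const_mul _),
        MeasureTheory.integral_const_mul, MeasureTheory.integral_const_mul] at this
    linarith
  -- bound on the gradient of η
  have hGL : ∀ x, G x ≤ (L:ℝ)^2 := by
    intro x
    have h1 : ‖gradient η x‖^2 = G x := by
      rw [grad_sq_eq η x]
    rw [← h1, grad_norm_eq]
    exact pow_le_pow_left₀ (norm_nonneg _) (norm_fderiv_le_of_lipschitz ℝ hηL) 2
  have hcbq_rIn : closedBall x₀ q ⊆ ball x₀ rIn := closedBall_subset_ball hqrIn
  have hcbq2R : closedBall x₀ q ⊆ ball x₀ (2*R) := closedBall_subset_ball (by linarith)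
  have hIu : IntegrableOn (fun x => (u x)^2) (closedBall x₀ q) := by
    apply ContinuousOn.integrableOn_compact (isCompact_closedBall x₀ q)
    exact (hu.1.continuousOn.mono hcbq2R).pow 2
  have hYle : Y ≤ (L:ℝ)^2 * ∫ x in closedBall x₀ q, (u x)^2 := by
    have h0 : Y = ∫ x in closedBall x₀ q, (w x)^2 * G x := by
      rw [hY]
      refine (setIntegral_eq_integral_of_forall_compl_eq_zero fun x hx => ?_).symm
      have : G x = 0 := by
        rw [hG]
        refine Finset.sum_eq_zero fun i _ => ?_
        rw [(hzero x hx).2]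
        simp
      rw [this]; ring
    rw [h0, ← MeasureTheory.integral_const_mul]
    apply setIntegral_mono_on hYint.integrableOn (hIu.const_mul _) measurableSet_closedBall
    intro x hx
    have hwx : w x = u x := hwu x (hcbq_rIn hx)
    rw [hwx]
    have := mul_le_mul_of_nonneg_left (hGL x) (sq_nonneg (u x))
    linarith
  -- final chain
  have hball_rIn : ball x₀ R ⊆ ball x₀ rIn := ball_subset_ball (by linarith)
  have hXnonneg : ∀ x : EuclideanSpace ℝ (Fin n),
      0 ≤ (η x * η x) * ∑ i, (W i x)^2 :=
    fun x => mul_nonneg (mul_self_nonneg _) (Finset.sum_nonneg fun i _ => sq_nonneg _)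
  calc ∫⁻ x in ball x₀ R, ENNReal.ofReal (‖gradient u x‖^2)
      = ∫⁻ x in ball x₀ R, ENNReal.ofReal ((η x * η x) * ∑ i, (W i x)^2) := by
        apply setLIntegral_congr_fun_ae measurableSet_ball
        refine Filter.Eventually.of_forall fun x hx => ?_
        have h1 : η x = 1 := hη1 x (le_of_lt (mem_ball.1 hx))
        have h2 : ∑ i, (W i x)^2 = ‖gradient u x‖^2 := by
          rw [grad_sq_eq u x]
          refine Finset.sum_congr rfl fun i _ => ?_
          simp only [hWdef]
          rw [hfd x (hball_rIn hx)]
        rw [h1, h2]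
        ring_nf
    _ ≤ ∫⁻ x, ENNReal.ofReal ((η x * η x) * ∑ i, (W i x)^2) :=
        setLIntegral_le_lintegral _ _
    _ = ENNReal.ofReal X :=
        (ofReal_integral_eq_lintegral_ofReal hXint
          (Filter.Eventually.of_forall fun x => hXnonneg x)).symm
    _ ≤ ENNReal.ofReal ((4 * (L:ℝ)^2) * ∫ x in closedBall x₀ q, (u x)^2) := by
        apply ENNReal.ofReal_le_ofReal
        linarith
    _ = ENNReal.ofReal (4 * (L:ℝ)^2) * ENNReal.ofReal (∫ x in closedBall x₀ q, (u x)^2) :=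
        ENNReal.ofReal_mul (by positivity)
    _ ≤ ENNReal.ofReal (4 * (L:ℝ)^2) * ∫⁻ x in ball x₀ (2*R), ENNReal.ofReal ((u x)^2) := by
        apply mul_le_mul_right
        calc ENNReal.ofReal (∫ x in closedBall x₀ q, (u x)^2)
            = ∫⁻ x in closedBall x₀ q, ENNReal.ofReal ((u x)^2) :=
              ofReal_integral_eq_lintegral_ofReal hIu
                (Filter.Eventually.of_forall fun x => sq_nonneg _)
          _ ≤ ∫⁻ x in ball x₀ (2*R), ENNReal.ofReal ((u x)^2) :=
              lintegral_mono_set hcbq2R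

-- === cutoff ===

lemma cutoff_exists (a b δ : ℝ) (hδ : 0 < δ) (hab : a + 2*δ < b) :
    ∃ φ : ℝ → ℝ, ContDiff ℝ 1 φ ∧ (∀ t ≤ a, φ t = 1) ∧ (∀ t, b ≤ t → φ t = 0) ∧
      LipschitzWith (Real.toNNReal (1/(b - a - 2*δ))) φ := by
  set ψ₀ : ℝ → ℝ := fun t => max 0 (min 1 (min ((t - a)/δ) ((b - t)/δ))) with hψ₀
  have hcont₀ : Continuous ψ₀ := by fun_prop
  have h₀nonneg : ∀ t, 0 ≤ ψ₀ t := fun t => le_max_left _ _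
  have h₀le1 : ∀ t, ψ₀ t ≤ 1 := fun t => max_le (by norm_num) (min_le_left _ _)
  have h₀zero_left : ∀ t ≤ a, ψ₀ t = 0 := by
    intro t ht
    have h1 : (t - a)/δ ≤ 0 := by
      apply div_nonpos_of_nonpos_of_nonneg <;> linarith
    exact max_eq_left (le_trans (min_le_right _ _) (le_trans (min_le_left _ _) h1))
  have h₀zero_right : ∀ t, b ≤ t → ψ₀ t = 0 := by
    intro t ht
    have h1 : (b - t)/δ ≤ 0 := by
      apply div_nonpos_of_nonpos_of_nonneg <;> linarith
    exact max_eq_left (le_trans (min_le_right _ _) (le_trans (min_le_right _ _) h1))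
  have h₀one : ∀ t, a + δ ≤ t → t ≤ b - δ → ψ₀ t = 1 := by
    intro t h1 h2
    have e1 : (1:ℝ) ≤ (t - a)/δ := (one_le_div hδ).2 (by linarith)
    have e2 : (1:ℝ) ≤ (b - t)/δ := (one_le_div hδ).2 (by linarith)
    have : min 1 (min ((t - a)/δ) ((b - t)/δ)) = 1 := min_eq_left (le_min e1 e2)
    rw [hψ₀]; simp only [this]; norm_num
  set I : ℝ := ∫ s in a..b, ψ₀ s with hI
  have hint : ∀ (c d : ℝ), IntervalIntegrable ψ₀ volume c d := fun c d =>
    hcont₀.intervalIntegrable c d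
  have hIlb : b - a - 2*δ ≤ I := by
    have hsplit : (∫ s in a..(a+δ), ψ₀ s) + (∫ s in (a+δ)..(b-δ), ψ₀ s)
        + (∫ s in (b-δ)..b, ψ₀ s) = I := by
      rw [hI, integral_add_adjacent_intervals (hint a (a+δ)) (hint (a+δ) (b-δ)),
        integral_add_adjacent_intervals (hint a (b-δ)) (hint (b-δ) b)]
    have h1 : 0 ≤ ∫ s in a..(a+δ), ψ₀ s :=
      integral_nonneg (by linarith) (fun s _ => h₀nonneg s)
    have h3 : 0 ≤ ∫ s in (b-δ)..b, ψ₀ s :=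
      integral_nonneg (by linarith) (fun s _ => h₀nonneg s)
    have h2 : (∫ s in (a+δ)..(b-δ), ψ₀ s) = b - a - 2*δ := by
      rw [integral_congr (g := fun _ => (1:ℝ)) ?_]
      · simp; ring
      · intro s hs
        rw [Set.uIcc_of_le (by linarith)] at hs
        exact h₀one s hs.1 hs.2
    linarith
  have hIpos : 0 < I := by linarith
  set φ : ℝ → ℝ := fun t => 1 - (∫ s in a..t, ψ₀ s) / I with hφ
  refine ⟨φ, ?_, ?_, ?_, ?_⟩
  · -- C¹
    have hd : ∀ t, HasDerivAt φ (-(ψ₀ t / I)) t := by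
      intro t
      have := (hcont₀.integral_hasStrictDerivAt a t).hasDerivAt
      exact (((this.div_const I)).const_sub 1)
    rw [contDiff_one_iff_deriv]
    refine ⟨fun t => (hd t).differentiableAt, ?_⟩
    have : deriv φ = fun t => -(ψ₀ t / I) := funext fun t => (hd t).deriv
    rw [this]; fun_prop
  · intro t ht
    have : (∫ s in a..t, ψ₀ s) = 0 := by
      rw [← neg_eq_zero, ← integral_symm]
      rw [integral_congr (g := fun _ => (0:ℝ)) ?_]
      · simp
      · intro s hs
        rw [Set.uIcc_of_le ht] at hs
        exact h₀zero_left s hs.2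
    simp [hφ, this]
  · intro t ht
    have h2 : (∫ s in b..t, ψ₀ s) = 0 := by
      rw [integral_congr (g := fun _ => (0:ℝ)) ?_]
      · simp
      · intro s hs
        rw [Set.uIcc_of_le ht] at hs
        exact h₀zero_right s hs.1
    have : (∫ s in a..t, ψ₀ s) = I := by
      rw [← integral_add_adjacent_intervals (hint a b) (hint b t), h2, add_zero]
    simp [hφ, this, div_self hIpos.ne']
  · -- Lipschitz
    rw [lipschitzWith_iff_dist_le_mul]
    intro s t
    have hsub : φ s - φ t = -(∫ x in t..s, ψ₀ x) / I := by
      rw [hφ]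
      have : (∫ x in a..s, ψ₀ x) = (∫ x in a..t, ψ₀ x) + ∫ x in t..s, ψ₀ x :=
        (integral_add_adjacent_intervals (hint a t) (hint t s)).symm
      field_simp [this]
      linarith [this]
    have hbound : ‖∫ x in t..s, ψ₀ x‖ ≤ 1 * |s - t| :=
      intervalIntegral.norm_integral_le_of_norm_le_const (fun x _ => by
        rw [Real.norm_eq_abs, abs_of_nonneg (h₀nonneg x)]; exact h₀le1 x)
    rw [Real.dist_eq, hsub, abs_div, abs_neg, abs_of_pos hIpos]
    rw [Real.norm_eq_abs] at hbound
    have hIc : (1:ℝ)/I ≤ 1/(b - a - 2*δ) :=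
      one_div_le_one_div_of_le (by linarith) hIlb
    have hcoe : ((Real.toNNReal (1/(b - a - 2*δ)) : ℝ≥0) : ℝ) = 1/(b - a - 2*δ) :=
      Real.coe_toNNReal _ (by apply one_div_nonneg.2; linarith)
    rw [hcoe, Real.dist_eq]
    calc |∫ x in t..s, ψ₀ x| / I ≤ (1 * |s - t|) / I := by
          gcongr
      _ = (1/I) * |s - t| := by ring
      _ ≤ (1/(b - a - 2*δ)) * |s - t| :=
          mul_le_mul_of_nonneg_right hIc (abs_nonneg _)

/-- Reverse Poincaré (Caccioppoli) inequality for harmonic functions, stated with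
Lebesgue lower integrals so that it holds even when the right-hand side is infinite. -/
theorem reverse_poincare (n : ℕ) (hn : 1 ≤ n)
    (u : EuclideanSpace ℝ (Fin n) → ℝ) (x₀ : EuclideanSpace ℝ (Fin n)) (R : ℝ) (hR : 0 < R)
    (hu : HarmonicOn u (Metric.ball x₀ (2 * R))) :
    ∫⁻ x in Metric.ball x₀ R, ENNReal.ofReal (‖gradient u x‖ ^ 2) ≤
      ENNReal.ofReal (4 / R ^ 2) *
        ∫⁻ x in Metric.ball x₀ (2 * R), ENNReal.ofReal ((u x) ^ 2) := by
  set I := ∫⁻ x in Metric.ball x₀ (2 * R), ENNReal.ofReal ((u x) ^ 2) with hIdef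
  by_cases hItop : I = ⊤
  · rw [hItop, ENNReal.mul_top (by
      simp only [ne_eq, ENNReal.ofReal_eq_zero, not_le]
      positivity)]
    exact le_top
  have main : ∀ θ : ℝ, θ ∈ Set.Ioo 0 (R/3) →
      ∫⁻ x in Metric.ball x₀ R, ENNReal.ofReal (‖gradient u x‖ ^ 2)
        ≤ ENNReal.ofReal (4 * (1/(R - 3*θ))^2) * I := by
    rintro θ ⟨hθ0, hθR⟩
    obtain ⟨φ, hφ1, hφa, hφb, hφL⟩ := cutoff_exists R (2*R - θ) θ hθ0 (by linarith)
    have hba : 2*R - θ - R - 2*θ = R - 3*θ := by ring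
    rw [hba] at hφL
    set η : EuclideanSpace ℝ (Fin n) → ℝ := fun x => φ (dist x x₀) with hηdef
    have hηC : ContDiff ℝ 1 η := by
      rw [contDiff_iff_contDiffAt]
      intro x
      by_cases hx : dist x x₀ < R
      · apply (contDiffAt_const (c := (1:ℝ))).congr_of_eventuallyEq
        filter_upwards [Metric.isOpen_ball.mem_nhds (mem_ball.2 hx)] with y hy
        exact hφa _ (le_of_lt (mem_ball.1 hy))
      · have hxne : x ≠ x₀ := by
          intro h
          rw [h, dist_self] at hx
          exact hx hR
        have hdist : ContDiffAt ℝ 1 (fun y => dist y x₀) x :=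
          ContDiffAt.dist ℝ contDiffAt_id contDiffAt_const (by simpa using hxne)
        exact hφ1.contDiffAt.comp x hdist
    have hL : LipschitzWith (Real.toNNReal (1/(R - 3*θ))) η := by
      rw [lipschitzWith_iff_dist_le_mul]
      intro x y
      calc dist (η x) (η y) ≤ (Real.toNNReal (1/(R - 3*θ)) : ℝ) * dist (dist x x₀) (dist y x₀) :=
            hφL.dist_le_mul _ _
        _ ≤ (Real.toNNReal (1/(R - 3*θ)) : ℝ) * dist x y := by
            apply mul_le_mul_of_nonneg_left ?_ (NNReal.coe_nonneg _)
            rw [Real.dist_eq]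
            exact abs_dist_sub_le x y x₀
    have hkey := key u x₀ R (2*R - θ) hR (by linarith) (by linarith) hu η hηC
      (fun x hx => hφa _ hx) (fun x hx => hφb _ hx) _ hL
    have hcoe : ((Real.toNNReal (1/(R - 3*θ)) : ℝ≥0) : ℝ) = 1/(R - 3*θ) :=
      Real.coe_toNNReal _ (by apply one_div_nonneg.2; linarith)
    rw [hcoe] at hkey
    exact hkey
  have htend : Filter.Tendsto (fun θ : ℝ => ENNReal.ofReal (4 * (1/(R - 3*θ))^2) * I)
      (nhdsWithin 0 (Set.Ioi 0)) (nhds (ENNReal.ofReal (4 / R^2) * I)) := by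
    apply ENNReal.Tendsto.mul_const ?_ (Or.inr hItop)
    have hc : ContinuousAt (fun θ : ℝ => 4 * (1/(R - 3*θ))^2) 0 := by
      apply ContinuousAt.mul continuousAt_const
      apply ContinuousAt.pow
      apply ContinuousAt.div continuousAt_const (by fun_prop)
      simp
      linarith
    have hval : (4 : ℝ) * (1/(R - 3*0))^2 = 4 / R^2 := by
      rw [show R - 3*0 = R by ring, one_div, inv_pow, div_eq_mul_inv]
    have h2 : ContinuousAt (fun θ : ℝ => ENNReal.ofReal (4 * (1/(R - 3*θ))^2)) 0 :=
      (ENNReal.continuous_ofReal.continuousAt).comp hc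
    have h3 := h2.tendsto
    rw [show (4 : ℝ) * (1/(R - 3*0))^2 = 4 / R^2 from hval] at h3
    exact h3.mono_left nhdsWithin_le_nhds
  refine ge_of_tendsto htend ?_
  filter_upwards [Ioo_mem_nhdsGT_of_mem
    (show (0:ℝ) ∈ Set.Ico (0:ℝ) (R/3) from ⟨le_rfl, by positivity⟩)] with θ hθ
  exact main θ hθ
end

section
/- First step of the proof of Yau's conjecture, on ℝⁿ: there is a constant C₁ = C₁(n) such that for every d ≥ 1, every h ∈ (0,1], every k ≥ 1, and every 2k-dimensional linear subspace H ⊆ ℋ_d(ℝⁿ), there exist a k-dimensional linear subspace K ⊆ H and a radius R > 0 such that for every v ∈ K with v not identically 0, ∫_{B_{(1+h)²R}(0)} v² dx ≤ C₁ (1+h)^{8d} · ∫_{B_R(0)} v² dx. -/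
open Metric MeasureTheory

/-- The space ℋ_d(ℝⁿ) of harmonic functions of polynomial growth of degree at most `d`. -/
def HdSet (n : ℕ) (d : ℝ) : Set (EuclideanSpace ℝ (Fin n) → ℝ) :=
  {u | HarmonicOn u Set.univ ∧
    ∃ C : ℝ, ∀ R > (0 : ℝ), ∀ x ∈ Metric.ball (0 : EuclideanSpace ℝ (Fin n)) R,
      |u x| ≤ C * (1 + R) ^ d}

section YauAux

open Module Matrix

open InnerProductSpace in
lemma sim_diag (E : Type) [AddCommGroup E] [Module ℝ E] [FiniteDimensional ℝ E]
    (B₀ B₁ : E →ₗ[ℝ] E →ₗ[ℝ] ℝ)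
    (h₀s : ∀ x y, B₀ x y = B₀ y x) (h₀p : ∀ x, x ≠ 0 → 0 < B₀ x x)
    (h₁s : ∀ x y, B₁ x y = B₁ y x) :
    ∃ (b : Basis (Fin (Module.finrank ℝ E)) ℝ E) (μ : Fin (Module.finrank ℝ E) → ℝ),
      (∀ i j, B₀ (b i) (b j) = if i = j then 1 else 0) ∧
      (∀ i j, B₁ (b i) (b j) = if i = j then μ i else 0) := by
  letI core : InnerProductSpace.Core ℝ E :=
    { inner := fun x y => B₀ x y
      conj_inner_symm := fun x y => by simpa using h₀s y x
      re_inner_nonneg := fun x => by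
        rcases eq_or_ne x 0 with rfl | hx
        · simp
        · simpa using (h₀p x hx).le
      definite := fun x hx => by
        by_contra h
        exact (h₀p x h).ne' (by simpa using hx)
      add_left := fun x y z => by simp
      smul_left := fun x y r => by simp }
  letI : NormedAddCommGroup E := core.toNormedAddCommGroup
  letI : InnerProductSpace ℝ E := InnerProductSpace.ofCore core.toCore
  have hinner : ∀ x y : E, ⟪x, y⟫_ℝ = B₀ x y := fun x y => rfl
  set T : E →ₗ[ℝ] E :=
    { toFun := fun x => (InnerProductSpace.toDual ℝ E).symm (LinearMap.toContinuousLinearMap (B₁ x))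
      map_add' := fun x y => by simp [map_add]
      map_smul' := fun r x => by simp [_root_.map_smul] } with hTdef
  have hTapp : ∀ x y : E, ⟪T x, y⟫_ℝ = B₁ x y := by
    intro x y
    simp [hTdef, InnerProductSpace.toDual_symm_apply]
  have hT : T.IsSymmetric := by
    intro x y
    rw [hTapp, real_inner_comm, hTapp, h₁s]
  have hfr : Module.finrank ℝ E = Module.finrank ℝ E := rfl
  obtain ⟨b, μ, hb⟩ : ∃ (b : OrthonormalBasis (Fin (Module.finrank ℝ E)) ℝ E)
      (μ : Fin (Module.finrank ℝ E) → ℝ), ∀ i, T (b i) = μ i • b i :=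
    ⟨hT.eigenvectorBasis hfr, hT.eigenvalues hfr, fun i => by
      simpa using hT.apply_eigenvectorBasis hfr i⟩
  refine ⟨b.toBasis, μ, fun i j => ?_, fun i j => ?_⟩
  · rw [← hinner]
    simpa using orthonormal_iff_ite.mp b.orthonormal i j
  · rw [← hTapp]
    simp only [OrthonormalBasis.coe_toBasis]
    rw [hb i, inner_smul_left]
    have hite := orthonormal_iff_ite.mp b.orthonormal i j
    simp only [starRingEnd_apply, star_trivial]
    rw [hite]
    split <;> simp

variable {E : Type} [AddCommGroup E] [Module ℝ E]

lemma bilin_expand {ι : Type} [Fintype ι] (b : Basis ι ℝ E)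
    (B : E →ₗ[ℝ] E →ₗ[ℝ] ℝ) (x y : E) :
    B x y = ∑ i, ∑ j, b.repr x i * b.repr y j * B (b i) (b j) := by
  rw [← LinearMap.sum_repr_mul_repr_mul b b x y]
  rw [Finsupp.sum_fintype]
  · refine Finset.sum_congr rfl fun i _ => ?_
    rw [Finsupp.sum_fintype]
    · refine Finset.sum_congr rfl fun j _ => ?_
      simp [mul_assoc]
    · intro j; simp
  · intro i; simp

lemma gram_basisChange {ι : Type} [Fintype ι] [DecidableEq ι]
    (b c : Basis ι ℝ E) (B : E →ₗ[ℝ] E →ₗ[ℝ] ℝ) :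
    LinearMap.toMatrix₂ c c B =
      (b.toMatrix c)ᵀ * LinearMap.toMatrix₂ b b B * (b.toMatrix c) := by
  ext i j
  rw [LinearMap.toMatrix₂_apply, bilin_expand b B (c i) (c j), Matrix.mul_apply]
  simp only [Matrix.mul_apply, Matrix.transpose_apply, Basis.toMatrix_apply,
    LinearMap.toMatrix₂_apply, Finset.sum_mul]
  rw [Finset.sum_comm]
  refine Finset.sum_congr rfl fun l _ => Finset.sum_congr rfl fun l' _ => by ring

lemma key_s8 [FiniteDimensional ℝ E] (B₀ B₁ : E →ₗ[ℝ] E →ₗ[ℝ] ℝ)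
    (h₀s : ∀ x y, B₀ x y = B₀ y x) (h₀p : ∀ x, x ≠ 0 → 0 < B₀ x x)
    (h₁s : ∀ x y, B₁ x y = B₁ y x)
    (c : Basis (Fin (finrank ℝ E)) ℝ E) :
    ∃ (dP : ℝ) (b : Basis (Fin (finrank ℝ E)) ℝ E) (μ : Fin (finrank ℝ E) → ℝ),
      0 < dP ∧
      (LinearMap.toMatrix₂ c c B₀).det = dP ∧
      (LinearMap.toMatrix₂ c c B₁).det = dP * ∏ i, μ i ∧
      (∀ i j, B₀ (b i) (b j) = if i = j then 1 else 0) ∧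
      (∀ i j, B₁ (b i) (b j) = if i = j then μ i else 0) := by
  obtain ⟨b, μ, h0, h1⟩ := sim_diag E B₀ B₁ h₀s h₀p h₁s
  have hM0 : LinearMap.toMatrix₂ b b B₀ = 1 := by
    ext i j; rw [LinearMap.toMatrix₂_apply, h0, Matrix.one_apply]
  have hM1 : LinearMap.toMatrix₂ b b B₁ = Matrix.diagonal μ := by
    ext i j; rw [LinearMap.toMatrix₂_apply, h1, Matrix.diagonal_apply]
  set P := b.toMatrix c with hP
  have hPdet : P.det ≠ 0 := by
    intro h
    have h2 := congrArg Matrix.det (Basis.toMatrix_mul_toMatrix_flip b c)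
    rw [Matrix.det_mul, Matrix.det_one, ← hP, h, zero_mul] at h2
    exact zero_ne_one h2
  refine ⟨P.det ^ 2, b, μ, sq_pos_of_ne_zero hPdet, ?_, ?_, h0, h1⟩
  · rw [gram_basisChange b c, Matrix.det_mul, Matrix.det_mul, hM0, Matrix.det_one,
      Matrix.det_transpose]; ring
  · rw [gram_basisChange b c, Matrix.det_mul, Matrix.det_mul, hM1, Matrix.det_diagonal,
      Matrix.det_transpose]; ring

lemma gram_det_pos [FiniteDimensional ℝ E] (B₀ : E →ₗ[ℝ] E →ₗ[ℝ] ℝ)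
    (h₀s : ∀ x y, B₀ x y = B₀ y x) (h₀p : ∀ x, x ≠ 0 → 0 < B₀ x x)
    (c : Basis (Fin (finrank ℝ E)) ℝ E) :
    0 < (LinearMap.toMatrix₂ c c B₀).det := by
  obtain ⟨dP, b, μ, hdP, hd0, -, -, -⟩ := key_s8 B₀ B₀ h₀s h₀p h₀s c
  rw [hd0]; exact hdP

lemma gram_det_upper [FiniteDimensional ℝ E] (B₀ B₁ : E →ₗ[ℝ] E →ₗ[ℝ] ℝ)
    (h₀s : ∀ x y, B₀ x y = B₀ y x) (h₀p : ∀ x, x ≠ 0 → 0 < B₀ x x)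
    (h₁s : ∀ x y, B₁ x y = B₁ y x)
    (hle : ∀ v, B₀ v v ≤ B₁ v v)
    (M : ℝ) (hM : ∀ v, B₁ v v ≤ M * B₀ v v)
    (c : Basis (Fin (finrank ℝ E)) ℝ E) (N : ℕ) (hN : finrank ℝ E = N) :
    (LinearMap.toMatrix₂ c c B₁).det ≤
      M ^ N * (LinearMap.toMatrix₂ c c B₀).det := by
  subst hN
  obtain ⟨dP, b, μ, hdP, hd0, hd1, h0, h1⟩ := key_s8 B₀ B₁ h₀s h₀p h₁s c
  have hμle : ∀ i, μ i ≤ M := fun i => by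
    have := hM (b i); rw [h1 i i, h0 i i] at this; simpa using this
  have hμ1 : ∀ i, 1 ≤ μ i := fun i => by
    have := hle (b i); rw [h1 i i, h0 i i] at this; simpa using this
  have hprod : ∏ i, μ i ≤ M ^ (finrank ℝ E) := by
    calc ∏ i, μ i ≤ ∏ _i : Fin (finrank ℝ E), M :=
          Finset.prod_le_prod (fun i _ => zero_le_one.trans (hμ1 i)) (fun i _ => hμle i)
      _ = M ^ (finrank ℝ E) := by simp
  rw [hd1, hd0, mul_comm (M ^ (finrank ℝ E)) dP]
  exact mul_le_mul_of_nonneg_left hprod hdP.le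

lemma gram_step [FiniteDimensional ℝ E] (k : ℕ)
    (hdim : finrank ℝ E = 2 * k)
    (B₀ B₁ : E →ₗ[ℝ] E →ₗ[ℝ] ℝ)
    (h₀s : ∀ x y, B₀ x y = B₀ y x) (h₀p : ∀ x, x ≠ 0 → 0 < B₀ x x)
    (h₁s : ∀ x y, B₁ x y = B₁ y x)
    (hle : ∀ v, B₀ v v ≤ B₁ v v)
    (Λ : ℝ) (hΛ : 1 ≤ Λ)
    (c : Basis (Fin (finrank ℝ E)) ℝ E) :
    (∃ K : Submodule ℝ E, finrank ℝ K = k ∧ ∀ v ∈ K, B₁ v v ≤ Λ * B₀ v v) ∨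
      Λ ^ (k + 1) * (LinearMap.toMatrix₂ c c B₀).det ≤ (LinearMap.toMatrix₂ c c B₁).det := by
  classical
  obtain ⟨dP, b, μ, hdP, hd0, hd1, h0, h1⟩ := key_s8 B₀ B₁ h₀s h₀p h₁s c
  have hμ1 : ∀ i, 1 ≤ μ i := fun i => by
    have := hle (b i); rw [h1 i i, h0 i i] at this; simpa using this
  set s : Finset (Fin (finrank ℝ E)) := Finset.univ.filter (fun i => μ i ≤ Λ) with hs
  by_cases hcard : k ≤ s.card
  · left
    obtain ⟨s', hs's, hs'card⟩ := Finset.exists_subset_card_eq hcard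
    refine ⟨Submodule.span ℝ (b '' ↑s'), ?_, ?_⟩
    · have hli : LinearIndependent ℝ (fun (i : ↥s') => b ↑i) :=
        b.linearIndependent.comp _ Subtype.val_injective
      have hr : Set.range (fun (i : ↥s') => b ↑i) = b '' ↑s' := by
        ext x; simp
      rw [← hr, finrank_span_eq_card hli, Fintype.card_coe, hs'card]
    · intro v hv
      have hsupp := (Basis.mem_span_image b).mp hv
      have hB1 : B₁ v v = ∑ i, b.repr v i * b.repr v i * μ i := by
        rw [bilin_expand b B₁ v v]
        refine Finset.sum_congr rfl fun i _ => ?_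
        rw [Finset.sum_eq_single i]
        · rw [h1 i i]; simp
        · intro j _ hj; rw [h1 i j, if_neg (Ne.symm hj)]; simp
        · intro hi; simp at hi
      have hB0 : B₀ v v = ∑ i, b.repr v i * b.repr v i := by
        rw [bilin_expand b B₀ v v]
        refine Finset.sum_congr rfl fun i _ => ?_
        rw [Finset.sum_eq_single i]
        · rw [h0 i i]; simp
        · intro j _ hj; rw [h0 i j, if_neg (Ne.symm hj)]; simp
        · intro hi; simp at hi
      rw [hB1, hB0, Finset.mul_sum]
      refine Finset.sum_le_sum fun i _ => ?_
      rcases eq_or_ne (b.repr v i) 0 with h | h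
      · simp [h]
      · have hi : i ∈ s' := by
          have : i ∈ (b.repr v).support := Finsupp.mem_support_iff.mpr h
          exact hsupp this
        have hiΛ : μ i ≤ Λ := by
          have := hs's hi; rw [hs, Finset.mem_filter] at this; exact this.2
        have hsq : 0 ≤ b.repr v i * b.repr v i := mul_self_nonneg _
        calc b.repr v i * b.repr v i * μ i ≤ b.repr v i * b.repr v i * Λ :=
              mul_le_mul_of_nonneg_left hiΛ hsq
          _ = Λ * (b.repr v i * b.repr v i) := by ring
  · right
    have hcard' : s.card + sᶜ.card = 2 * k := by
      rw [Finset.card_add_card_compl]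
      simp [hdim]
    have htcard : k + 1 ≤ sᶜ.card := by omega
    have hΛ0 : (0:ℝ) ≤ Λ := zero_le_one.trans hΛ
    have hprod : Λ ^ (k + 1) ≤ ∏ i, μ i := by
      have hsplit : (∏ i ∈ s, μ i) * (∏ i ∈ sᶜ, μ i) = ∏ i, μ i :=
        Finset.prod_mul_prod_compl s μ
      have h1' : (1:ℝ) ≤ ∏ i ∈ s, μ i := by
        have := Finset.prod_le_prod (s := s) (f := fun _ => (1:ℝ)) (g := μ)
          (fun _ _ => zero_le_one) (fun i _ => hμ1 i)
        simpa using this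
      have h2' : Λ ^ (k + 1) ≤ ∏ i ∈ sᶜ, μ i := by
        calc Λ ^ (k + 1) ≤ Λ ^ sᶜ.card := pow_le_pow_right₀ hΛ htcard
          _ = ∏ _i ∈ sᶜ, Λ := by rw [Finset.prod_const]
          _ ≤ ∏ i ∈ sᶜ, μ i := Finset.prod_le_prod (fun _ _ => hΛ0) (fun i hi => by
              rw [Finset.mem_compl, hs, Finset.mem_filter] at hi
              push_neg at hi
              exact (hi (Finset.mem_univ i)).le)
      calc Λ ^ (k+1) ≤ ∏ i ∈ sᶜ, μ i := h2'
        _ = 1 * ∏ i ∈ sᶜ, μ i := by ring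
        _ ≤ (∏ i ∈ s, μ i) * ∏ i ∈ sᶜ, μ i := by
            refine mul_le_mul_of_nonneg_right h1' ?_
            exact le_trans (by positivity) h2'
        _ = ∏ i, μ i := hsplit
    rw [hd0, hd1]
    calc Λ ^ (k+1) * dP ≤ (∏ i, μ i) * dP := mul_le_mul_of_nonneg_right hprod hdP.le
      _ = dP * ∏ i, μ i := by ring

lemma arith (n k : ℕ) (hn : 1 ≤ n) (hk : 1 ≤ k) (d h : ℝ) (hd : 1 ≤ d)
    (hh0 : 0 < h) (hh1 : h ≤ 1)
    (R₀ : ℝ) (hR₀ : 1 ≤ R₀) (S ω : ℝ) (hS : 0 ≤ S) (hω : 0 ≤ ω)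
    (hall : ∀ m : ℕ, ((16:ℝ) ^ n * (1 + h) ^ (8 * d)) ^ ((k + 1) * m) ≤
      (S * (1 + R₀ * ((1 + h) ^ 2) ^ m) ^ (2 * d) *
        ((R₀ * ((1 + h) ^ 2) ^ m) ^ n * ω)) ^ (2 * k)) : False := by
  set q : ℝ := 1 + h with hq
  have hq1 : 1 < q := by simp only [hq]; linarith
  have hq0 : (0:ℝ) < q := by linarith
  have hq2 : q ≤ 2 := by simp only [hq]; linarith
  have hd0 : (0:ℝ) ≤ d := by linarith
  have key0 : ∀ (x : ℝ) (N : ℕ), ((q ^ x) ^ N : ℝ) = q ^ (x * N) := fun x N => by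
    rw [← Real.rpow_natCast (q ^ x) N, ← Real.rpow_mul hq0.le]
  set G : ℝ := max 1 (S * 2 ^ (2 * d) * R₀ ^ (2 * d) * R₀ ^ n * ω) with hG
  have hG1 : (1:ℝ) ≤ G := le_max_left _ _
  have hG0 : (0:ℝ) < G := lt_of_lt_of_le one_pos hG1
  have hbase : ∀ m : ℕ, S * (1 + R₀ * (q ^ 2) ^ m) ^ (2 * d) * ((R₀ * (q ^ 2) ^ m) ^ n * ω) ≤
      G * q ^ (4 * d * m + 2 * (n:ℝ) * m) := by
    intro m
    have hqm : (0:ℝ) < (q ^ 2) ^ m := by positivity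
    have hrm1 : (1:ℝ) ≤ R₀ * (q ^ 2) ^ m := by
      have h5 : (1:ℝ) ≤ (q ^ 2) ^ m := one_le_pow₀ (by nlinarith)
      nlinarith
    have hq4 : ((q ^ 2) ^ m : ℝ) ^ (2 * d) = q ^ (4 * d * m) := by
      rw [← pow_mul, ← Real.rpow_natCast q (2 * m), ← Real.rpow_mul hq0.le]
      congr 1; push_cast; ring
    have h1 : (1 + R₀ * (q ^ 2) ^ m) ^ (2 * d) ≤ (2 * (R₀ * (q ^ 2) ^ m)) ^ (2 * d) :=
      Real.rpow_le_rpow (by linarith) (by linarith) (by linarith)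
    have h2 : (2 * (R₀ * (q ^ 2) ^ m)) ^ (2 * d) =
        2 ^ (2 * d) * R₀ ^ (2 * d) * q ^ (4 * d * m) := by
      rw [Real.mul_rpow (by norm_num) (by positivity),
        Real.mul_rpow (by linarith) (by positivity), hq4]
      ring
    have h3 : (R₀ * (q ^ 2) ^ m) ^ n = R₀ ^ n * q ^ (2 * (n:ℝ) * m) := by
      rw [mul_pow, ← pow_mul, ← pow_mul, ← Real.rpow_natCast q (2 * (m * n))]
      congr 2
      push_cast; ring
    calc S * (1 + R₀ * (q ^ 2) ^ m) ^ (2 * d) * ((R₀ * (q ^ 2) ^ m) ^ n * ω)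
        ≤ S * (2 ^ (2*d) * R₀ ^ (2*d) * q ^ (4 * d * m)) * ((R₀ ^ n * q ^ (2 * (n:ℝ) * m)) * ω) := by
          rw [h3]
          refine mul_le_mul ?_ le_rfl (by positivity) ?_
          · rw [← h2]
            exact mul_le_mul_of_nonneg_left h1 hS
          · positivity
      _ = (S * 2 ^ (2*d) * R₀ ^ (2*d) * R₀ ^ n * ω) * (q ^ (4 * d * m) * q ^ (2 * (n:ℝ) * m)) := by
          ring
      _ ≤ G * q ^ (4 * d * m + 2 * (n:ℝ) * m) := by
          rw [← Real.rpow_add hq0]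
          exact mul_le_mul_of_nonneg_right (le_max_right _ _) (Real.rpow_nonneg hq0.le _)
  have hmain : ∀ m : ℕ, (16:ℝ) ^ (n * m) ≤ G ^ (2 * k) := by
    intro m
    have h0 := (hall m).trans (pow_le_pow_left₀ (by positivity) (hbase m) (2 * k))
    have e1 : ((16:ℝ) ^ n * q ^ (8 * d)) ^ ((k + 1) * m) =
        16 ^ (n * ((k + 1) * m)) * q ^ (8 * d * (((k + 1) * m : ℕ) : ℝ)) := by
      rw [mul_pow, ← pow_mul, key0]
    have e2 : (G * q ^ (4 * d * m + 2 * (n:ℝ) * m)) ^ (2 * k) =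
        G ^ (2 * k) * q ^ ((4 * d * m + 2 * (n:ℝ) * m) * ((2 * k : ℕ) : ℝ)) := by
      rw [mul_pow, key0]
    rw [e1, e2] at h0
    have e3 : q ^ (8 * d * (((k + 1) * m : ℕ) : ℝ)) =
        q ^ (8 * d * (k:ℝ) * m) * q ^ (8 * d * (m:ℝ)) := by
      rw [← Real.rpow_add hq0]; congr 1; push_cast; ring
    have e4 : q ^ ((4 * d * m + 2 * (n:ℝ) * m) * ((2 * k : ℕ) : ℝ)) =
        q ^ (8 * d * (k:ℝ) * m) * q ^ (4 * (n:ℝ) * k * m) := by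
      rw [← Real.rpow_add hq0]; congr 1; push_cast; ring
    rw [e3, e4] at h0
    have hpos : (0:ℝ) < q ^ (8 * d * (k:ℝ) * m) := Real.rpow_pos_of_pos hq0 _
    have h0' : (16:ℝ) ^ (n * ((k + 1) * m)) * q ^ (8 * d * (m:ℝ)) ≤
        G ^ (2 * k) * q ^ (4 * (n:ℝ) * k * m) := by
      refine le_of_mul_le_mul_left ?_ hpos
      calc q ^ (8 * d * (k:ℝ) * m) * ((16:ℝ) ^ (n * ((k + 1) * m)) * q ^ (8 * d * (m:ℝ)))
          = (16:ℝ) ^ (n * ((k + 1) * m)) * (q ^ (8 * d * (k:ℝ) * m) * q ^ (8 * d * (m:ℝ))) := by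
            ring
        _ ≤ G ^ (2 * k) * (q ^ (8 * d * (k:ℝ) * m) * q ^ (4 * (n:ℝ) * k * m)) := h0
        _ = q ^ (8 * d * (k:ℝ) * m) * (G ^ (2 * k) * q ^ (4 * (n:ℝ) * k * m)) := by ring
    have hone : (1:ℝ) ≤ q ^ (8 * d * (m:ℝ)) :=
      Real.one_le_rpow hq1.le (by positivity)
    have hupper : q ^ (4 * (n:ℝ) * k * m) ≤ (16:ℝ) ^ (n * k * m) := by
      calc q ^ (4 * (n:ℝ) * k * m) ≤ (2:ℝ) ^ (4 * (n:ℝ) * k * m) :=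
            Real.rpow_le_rpow hq0.le hq2 (by positivity)
        _ = (2:ℝ) ^ ((4 * (n * k * m) : ℕ) : ℝ) := by congr 1; push_cast; ring
        _ = (2:ℝ) ^ (4 * (n * k * m)) := Real.rpow_natCast 2 _
        _ = (16:ℝ) ^ (n * k * m) := by rw [pow_mul]; norm_num
    have h5 : (16:ℝ) ^ (n * ((k + 1) * m)) = 16 ^ (n * k * m) * 16 ^ (n * m) := by
      rw [← pow_add]; congr 1; ring
    have h6 : (16:ℝ) ^ (n * k * m) * 16 ^ (n * m) ≤ G ^ (2 * k) * (16:ℝ) ^ (n * k * m) := by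
      calc (16:ℝ) ^ (n * k * m) * 16 ^ (n * m) = 16 ^ (n * ((k + 1) * m)) * 1 := by
            rw [h5, mul_one]
        _ ≤ 16 ^ (n * ((k + 1) * m)) * q ^ (8 * d * (m:ℝ)) := by
            exact mul_le_mul_of_nonneg_left hone (by positivity)
        _ ≤ G ^ (2 * k) * q ^ (4 * (n:ℝ) * k * m) := h0'
        _ ≤ G ^ (2 * k) * (16:ℝ) ^ (n * k * m) := by
            exact mul_le_mul_of_nonneg_left hupper (by positivity)
    have h16pos : (0:ℝ) < (16:ℝ) ^ (n * k * m) := by positivity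
    refine le_of_mul_le_mul_left ?_ h16pos
    calc (16:ℝ) ^ (n * k * m) * 16 ^ (n * m) ≤ G ^ (2 * k) * (16:ℝ) ^ (n * k * m) := h6
      _ = (16:ℝ) ^ (n * k * m) * G ^ (2 * k) := mul_comm _ _
  obtain ⟨m, hm⟩ := pow_unbounded_of_one_lt (G ^ (2 * k)) (by norm_num : (1:ℝ) < 16)
  have h7 := hmain m
  have h16 : (16:ℝ) ^ m ≤ 16 ^ (n * m) :=
    pow_le_pow_right₀ (by norm_num) (Nat.le_mul_of_pos_left m hn)
  linarith


open Metric MeasureTheory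

/-- Functions vanishing on the ball of radius `r`. -/
def vanishSub (n : ℕ) (r : ℝ) : Submodule ℝ (EuclideanSpace ℝ (Fin n) → ℝ) where
  carrier := {f | ∀ x ∈ ball (0 : EuclideanSpace ℝ (Fin n)) r, f x = 0}
  zero_mem' := fun x _ => rfl
  add_mem' := fun {f g} hf hg x hx => by
    simp only [Pi.add_apply, hf x hx, hg x hx, add_zero]
  smul_mem' := fun c {f} hf x hx => by
    simp only [Pi.smul_apply, hf x hx, smul_zero]

lemma exists_posdef_radius (H : Submodule ℝ (EuclideanSpace ℝ (Fin n) → ℝ))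
    [FiniteDimensional ℝ ↥H] :
    ∃ R₀ : ℝ, 1 ≤ R₀ ∧ ∀ v : ↥H, v ≠ 0 →
      ∃ x ∈ ball (0 : EuclideanSpace ℝ (Fin n)) R₀, (v : EuclideanSpace ℝ (Fin n) → ℝ) x ≠ 0 := by
  classical
  set W : ℕ → Submodule ℝ ↥H := fun m => (vanishSub n (m + 1)).comap H.subtype with hW
  have hWmem : ∀ (m : ℕ) (v : ↥H), v ∈ W m ↔
      ∀ x ∈ ball (0 : EuclideanSpace ℝ (Fin n)) ((m : ℝ) + 1),
        (v : EuclideanSpace ℝ (Fin n) → ℝ) x = 0 := fun m v => Iff.rfl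
  have hmono : ∀ m m' : ℕ, m ≤ m' → W m' ≤ W m := by
    intro m m' hmm v hv
    rw [hWmem] at hv ⊢
    intro x hx
    exact hv x (ball_subset_ball (by exact_mod_cast by linarith [show (m:ℝ) ≤ m' from Nat.cast_le.mpr hmm] : (m:ℝ)+1 ≤ (m':ℝ)+1) hx)
  -- pick the index with minimal finrank
  have hne : (Set.range fun m => finrank ℝ (W m)).Nonempty := ⟨_, ⟨0, rfl⟩⟩
  obtain ⟨m₀, hm₀⟩ := Nat.sInf_mem hne
  have hmin : ∀ m, finrank ℝ (W m₀) ≤ finrank ℝ (W m) := by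
    intro m
    exact le_trans (le_of_eq hm₀) (Nat.sInf_le ⟨m, rfl⟩)
  have hstab : ∀ m, m₀ ≤ m → W m = W m₀ :=
    fun m hm => Submodule.eq_of_le_of_finrank_le (hmono m₀ m hm) (hmin m)
  have hbot : W m₀ = ⊥ := by
    rw [Submodule.eq_bot_iff]
    intro v hv
    have hvzero : (v : EuclideanSpace ℝ (Fin n) → ℝ) = 0 := by
      funext x
      set m : ℕ := max m₀ ⌈‖x‖⌉₊ with hm
      have hvm : v ∈ W m := by rw [hstab m (le_max_left _ _)]; exact hv
      rw [hWmem] at hvm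
      refine hvm x ?_
      rw [mem_ball, dist_zero_right]
      calc ‖x‖ ≤ (⌈‖x‖⌉₊ : ℝ) := Nat.le_ceil _
        _ ≤ (m : ℝ) := Nat.cast_le.mpr (le_max_right _ _)
        _ < (m : ℝ) + 1 := by linarith
    exact Subtype.ext hvzero
  refine ⟨(m₀ : ℝ) + 1, le_add_of_nonneg_left (Nat.cast_nonneg _), fun v hv => ?_⟩
  by_contra hcon
  push_neg at hcon
  exact hv (by rw [← Submodule.mem_bot (R := ℝ), ← hbot, hWmem]; exact hcon)

variable {n : ℕ}

lemma hd_continuous {d : ℝ} {u : EuclideanSpace ℝ (Fin n) → ℝ} (hu : u ∈ HdSet n d) :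
    Continuous u := by
  have h := hu.1.1
  rw [contDiffOn_univ] at h
  exact h.continuous

lemma integrableOn_mul_ball (u v : EuclideanSpace ℝ (Fin n) → ℝ)
    (hu : Continuous u) (hv : Continuous v) (r : ℝ) :
    IntegrableOn (fun x => u x * v x) (ball (0 : EuclideanSpace ℝ (Fin n)) r) := by
  have h := ((hu.mul hv).continuousOn).integrableOn_compact (μ := volume)
    (isCompact_closedBall (0 : EuclideanSpace ℝ (Fin n)) r)
  exact h.mono_set ball_subset_closedBall

lemma integral_sq_pos (v : EuclideanSpace ℝ (Fin n) → ℝ) (hv : Continuous v) {r : ℝ}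
    {x₀ : EuclideanSpace ℝ (Fin n)} (hx₀ : x₀ ∈ ball (0 : EuclideanSpace ℝ (Fin n)) r)
    (hvx : v x₀ ≠ 0) : 0 < ∫ x in ball (0 : EuclideanSpace ℝ (Fin n)) r, v x * v x := by
  rw [setIntegral_pos_iff_support_of_nonneg_ae
    (Filter.Eventually.of_forall fun x => mul_self_nonneg (v x))
    (integrableOn_mul_ball v v hv hv r)]
  have hopen : IsOpen ({x | v x ≠ 0} ∩ ball (0 : EuclideanSpace ℝ (Fin n)) r) :=
    (isOpen_ne.preimage hv).inter isOpen_ball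
  refine lt_of_lt_of_le (hopen.measure_pos volume ⟨x₀, hvx, hx₀⟩) (measure_mono ?_)
  rintro x ⟨hx1, hx2⟩
  exact ⟨by simp [Function.support, mul_self_eq_zero]; exact hx1, hx2⟩

lemma hd_integral_bound (hn : 1 ≤ n) {d : ℝ} {u : EuclideanSpace ℝ (Fin n) → ℝ}
    (hu : u ∈ HdSet n d) :
    ∃ C : ℝ, 0 ≤ C ∧ ∀ r : ℝ, 0 < r →
      ∫ x in ball (0 : EuclideanSpace ℝ (Fin n)) r, u x * u x ≤
        C * (1 + r) ^ (2 * d) *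
          (r ^ n * (volume (ball (0 : EuclideanSpace ℝ (Fin n)) 1)).toReal) := by
  haveI : Nonempty (Fin n) := ⟨⟨0, hn⟩⟩
  haveI : Nontrivial (EuclideanSpace ℝ (Fin n)) := inferInstance
  obtain ⟨C, hC⟩ := hu.2
  refine ⟨(max C 0) ^ 2, sq_nonneg _, fun r hr => ?_⟩
  have hr1 : (0:ℝ) ≤ 1 + r := by linarith
  have hb : ∀ x ∈ ball (0 : EuclideanSpace ℝ (Fin n)) r,
      ‖u x * u x‖ ≤ (max C 0 * (1 + r) ^ d) ^ 2 := by
    intro x hx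
    have h1 := hC r hr x hx
    have h2 : |u x| ≤ max C 0 * (1 + r) ^ d :=
      h1.trans (mul_le_mul_of_nonneg_right (le_max_left C 0) (Real.rpow_nonneg hr1 d))
    have h3 : (0:ℝ) ≤ max C 0 * (1 + r) ^ d :=
      mul_nonneg (le_max_right C 0) (Real.rpow_nonneg hr1 d)
    calc ‖u x * u x‖ = |u x| * |u x| := by rw [Real.norm_eq_abs, abs_mul]
      _ ≤ (max C 0 * (1 + r) ^ d) * (max C 0 * (1 + r) ^ d) :=
          mul_le_mul h2 h2 (abs_nonneg _) h3
      _ = (max C 0 * (1 + r) ^ d) ^ 2 := (sq _).symm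
  have hlt : volume (ball (0 : EuclideanSpace ℝ (Fin n)) r) < ⊤ := measure_ball_lt_top
  have hbound := norm_setIntegral_le_of_norm_le_const hlt hb
  have hvol : (volume (ball (0 : EuclideanSpace ℝ (Fin n)) r)).toReal =
      r ^ n * (volume (ball (0 : EuclideanSpace ℝ (Fin n)) 1)).toReal := by
    rw [Measure.addHaar_ball _ _ hr.le, ENNReal.toReal_mul, ENNReal.toReal_ofReal (by positivity),
      finrank_euclideanSpace_fin]
  have hsq : (max C 0 * (1 + r) ^ d) ^ 2 = (max C 0) ^ 2 * (1 + r) ^ (2 * d) := by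
    rw [mul_pow, ← Real.rpow_natCast ((1 + r) ^ d) 2, ← Real.rpow_mul hr1]
    norm_num [mul_comm d 2]
  calc ∫ x in ball (0 : EuclideanSpace ℝ (Fin n)) r, u x * u x ≤
        ‖∫ x in ball (0 : EuclideanSpace ℝ (Fin n)) r, u x * u x‖ := le_abs_self _
    _ ≤ (max C 0 * (1 + r) ^ d) ^ 2 *
        (volume (ball (0 : EuclideanSpace ℝ (Fin n)) r)).toReal := hbound
    _ = (max C 0) ^ 2 * (1 + r) ^ (2 * d) *
        (r ^ n * (volume (ball (0 : EuclideanSpace ℝ (Fin n)) 1)).toReal) := by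
        rw [hsq, hvol]


lemma bilin_diag_apply {E : Type} [AddCommGroup E] [Module ℝ E] {ι : Type} [Fintype ι]
    [DecidableEq ι] (b : Basis ι ℝ E) (B : E →ₗ[ℝ] E →ₗ[ℝ] ℝ) (μ : ι → ℝ)
    (hB : ∀ i j, B (b i) (b j) = if i = j then μ i else 0) (v : E) :
    B v v = ∑ i, b.repr v i * b.repr v i * μ i := by
  rw [bilin_expand b B v v]
  refine Finset.sum_congr rfl fun i _ => ?_
  rw [Finset.sum_eq_single i]
  · rw [hB i i]; simp
  · intro j _ hj; rw [hB i j, if_neg (Ne.symm hj)]; simp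
  · intro hi; simp at hi

lemma integral_sq_le {n : ℕ} (hn : 1 ≤ n) (v : EuclideanSpace ℝ (Fin n) → ℝ) (hv : Continuous v)
    {r c : ℝ} (hr : 0 < r) (hc : 0 ≤ c)
    (hub : ∀ x ∈ ball (0 : EuclideanSpace ℝ (Fin n)) r, |v x| ≤ c) :
    ∫ x in ball (0 : EuclideanSpace ℝ (Fin n)) r, v x * v x ≤
      c ^ 2 * (r ^ n * (volume (ball (0 : EuclideanSpace ℝ (Fin n)) 1)).toReal) := by
  haveI : Nonempty (Fin n) := ⟨⟨0, hn⟩⟩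
  have hb : ∀ x ∈ ball (0 : EuclideanSpace ℝ (Fin n)) r, ‖v x * v x‖ ≤ c ^ 2 := by
    intro x hx
    calc ‖v x * v x‖ = |v x| * |v x| := by rw [Real.norm_eq_abs, abs_mul]
      _ ≤ c * c := mul_le_mul (hub x hx) (hub x hx) (abs_nonneg _) hc
      _ = c ^ 2 := (sq c).symm
  have hlt : volume (ball (0 : EuclideanSpace ℝ (Fin n)) r) < ⊤ := measure_ball_lt_top
  have hbound := norm_setIntegral_le_of_norm_le_const hlt hb
  have hvol : (volume (ball (0 : EuclideanSpace ℝ (Fin n)) r)).toReal =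
      r ^ n * (volume (ball (0 : EuclideanSpace ℝ (Fin n)) 1)).toReal := by
    rw [Measure.addHaar_ball _ _ hr.le, ENNReal.toReal_mul, ENNReal.toReal_ofReal (by positivity),
      finrank_euclideanSpace_fin]
  calc ∫ x in ball (0 : EuclideanSpace ℝ (Fin n)) r, v x * v x
      ≤ ‖∫ x in ball (0 : EuclideanSpace ℝ (Fin n)) r, v x * v x‖ := le_abs_self _
    _ ≤ c ^ 2 * (volume (ball (0 : EuclideanSpace ℝ (Fin n)) r)).toReal := hbound
    _ = c ^ 2 * (r ^ n * (volume (ball (0 : EuclideanSpace ℝ (Fin n)) 1)).toReal) := by rw [hvol]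

/-- The bilinear form given by integrating the product over a centered ball. -/
noncomputable def ballForm {n : ℕ} (H : Submodule ℝ (EuclideanSpace ℝ (Fin n) → ℝ))
    (hcont : ∀ w : ↥H, Continuous (w : EuclideanSpace ℝ (Fin n) → ℝ)) (r : ℝ) :
    ↥H →ₗ[ℝ] ↥H →ₗ[ℝ] ℝ :=
  LinearMap.mk₂ ℝ
    (fun u v => ∫ x in ball (0 : EuclideanSpace ℝ (Fin n)) r,
      (u : EuclideanSpace ℝ (Fin n) → ℝ) x * (v : EuclideanSpace ℝ (Fin n) → ℝ) x)
    (fun u u' v => by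
      simp_rw [Submodule.coe_add, Pi.add_apply, add_mul]
      exact integral_add (integrableOn_mul_ball _ _ (hcont u) (hcont v) r)
        (integrableOn_mul_ball _ _ (hcont u') (hcont v) r))
    (fun a u v => by
      simp_rw [Submodule.coe_smul, Pi.smul_apply, smul_eq_mul, mul_assoc]
      exact integral_const_mul a _)
    (fun u v v' => by
      simp_rw [Submodule.coe_add, Pi.add_apply, mul_add]
      exact integral_add (integrableOn_mul_ball _ _ (hcont u) (hcont v) r)
        (integrableOn_mul_ball _ _ (hcont u) (hcont v') r))
    (fun a u v => by
      simp_rw [Submodule.coe_smul, Pi.smul_apply, smul_eq_mul, mul_left_comm]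
      exact integral_const_mul a _)

end YauAux

set_option maxHeartbeats 1600000 in
set_option synthInstance.maxHeartbeats 400000 in
/-- First step of the proof of Yau's conjecture on ℝⁿ: given a `2k`-dimensional subspace
`H ⊆ ℋ_d(ℝⁿ)` and `h ∈ (0,1]`, there are a `k`-dimensional subspace `K ⊆ H` and `R > 0`
with `∫_{B_{(1+h)²R}} v² ≤ C₁ (1+h)^{8d} ∫_{B_R} v²` for all `v ∈ K \ {0}`. -/
theorem yau_step_one (n : ℕ) (hn : 1 ≤ n) :
    ∃ C₁ : ℝ, ∀ d : ℝ, 1 ≤ d → ∀ h : ℝ, h ∈ Set.Ioc (0 : ℝ) 1 → ∀ k : ℕ, 1 ≤ k →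
      ∀ H : Submodule ℝ (EuclideanSpace ℝ (Fin n) → ℝ), (H : Set _) ⊆ HdSet n d →
        Module.finrank ℝ H = 2 * k →
        ∃ K : Submodule ℝ (EuclideanSpace ℝ (Fin n) → ℝ), K ≤ H ∧
          Module.finrank ℝ K = k ∧
          ∃ R : ℝ, 0 < R ∧ ∀ v ∈ K, v ≠ 0 →
            ∫ x in Metric.ball (0 : EuclideanSpace ℝ (Fin n)) ((1 + h) ^ 2 * R), (v x) ^ 2 ≤
              C₁ * (1 + h) ^ (8 * d) *
                ∫ x in Metric.ball (0 : EuclideanSpace ℝ (Fin n)) R, (v x) ^ 2 := by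
  classical
  refine ⟨(16:ℝ) ^ n, ?_⟩
  intro d hd h hh k hk H hHsub hHrank
  obtain ⟨hh0, hh1⟩ := hh
  haveI : FiniteDimensional ℝ ↥H := FiniteDimensional.of_finrank_pos (by rw [hHrank]; omega)
  have hcont : ∀ w : ↥H, Continuous (w : EuclideanSpace ℝ (Fin n) → ℝ) :=
    fun w => hd_continuous (hHsub w.2)
  set Bf : ℝ → (↥H →ₗ[ℝ] ↥H →ₗ[ℝ] ℝ) := ballForm H hcont with hBf
  have hBapp : ∀ (r : ℝ) (u v : ↥H), Bf r u v =
      ∫ x in ball (0 : EuclideanSpace ℝ (Fin n)) r,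
        (u : EuclideanSpace ℝ (Fin n) → ℝ) x * (v : EuclideanSpace ℝ (Fin n) → ℝ) x :=
    fun r u v => rfl
  have hsymm : ∀ (r : ℝ) (u v : ↥H), Bf r u v = Bf r v u := by
    intro r u v; rw [hBapp, hBapp]; simp_rw [mul_comm]
  have hmono : ∀ {r r' : ℝ}, r ≤ r' → ∀ v : ↥H, Bf r v v ≤ Bf r' v v := by
    intro r r' hrr v
    rw [hBapp, hBapp]
    exact setIntegral_mono_set (integrableOn_mul_ball _ _ (hcont v) (hcont v) r')
      (Filter.Eventually.of_forall fun x => mul_self_nonneg _)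
      (HasSubset.Subset.eventuallyLE (ball_subset_ball hrr))
  obtain ⟨R₀, hR₀1, hR₀⟩ := exists_posdef_radius H
  have hpos : ∀ {r : ℝ}, R₀ ≤ r → ∀ v : ↥H, v ≠ 0 → 0 < Bf r v v := by
    intro r hrr v hv
    obtain ⟨x₀, hx₀, hvx₀⟩ := hR₀ v hv
    rw [hBapp]
    exact integral_sq_pos _ (hcont v) (ball_subset_ball hrr hx₀) hvx₀
  obtain ⟨b, σ, hb0, hb1⟩ := sim_diag ↥H (Bf R₀) (Bf R₀) (hsymm R₀)
    (fun v hv => hpos le_rfl v hv) (hsymm R₀)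
  choose C hC using fun i => (hHsub (b i).2).2
  set Cm : Fin (Module.finrank ℝ ↥H) → ℝ := fun i => max (C i) 0 with hCm
  set S : ℝ := ∑ i, Cm i ^ 2 with hSdef
  have hS0 : 0 ≤ S := Finset.sum_nonneg fun i _ => sq_nonneg _
  set ω : ℝ := (volume (ball (0 : EuclideanSpace ℝ (Fin n)) 1)).toReal with hωdef
  have hω0 : 0 ≤ ω := ENNReal.toReal_nonneg
  have hrpow0 : ∀ r : ℝ, 0 < r → (0:ℝ) ≤ (1 + r) ^ d := fun r hr =>
    Real.rpow_nonneg (by linarith) d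
  have hM : ∀ r : ℝ, 0 < r → ∀ v : ↥H,
      Bf r v v ≤ S * (1 + r) ^ (2 * d) * (r ^ n * ω) * Bf R₀ v v := by
    intro r hr v
    set a : Fin (Module.finrank ℝ ↥H) → ℝ := fun i => b.repr v i with ha
    have hv_eq : ∀ x, (v : EuclideanSpace ℝ (Fin n) → ℝ) x =
        ∑ i, a i * (b i : EuclideanSpace ℝ (Fin n) → ℝ) x := by
      intro x
      conv_lhs => rw [← b.sum_repr v]
      rw [AddSubmonoidClass.coe_finset_sum, Finset.sum_apply]
      exact Finset.sum_congr rfl fun i _ => by simp [ha]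
    have hB0v : Bf R₀ v v = ∑ i, a i * a i := by
      rw [bilin_diag_apply b (Bf R₀) (fun _ => 1)
        (fun i j => by rw [hb0 i j]) v]
      simp [ha]
    have hub : ∀ x ∈ ball (0 : EuclideanSpace ℝ (Fin n)) r,
        |(v : EuclideanSpace ℝ (Fin n) → ℝ) x| ≤ (∑ i, |a i| * Cm i) * (1 + r) ^ d := by
      intro x hx
      rw [hv_eq x]
      calc |∑ i, a i * (b i : EuclideanSpace ℝ (Fin n) → ℝ) x|
          ≤ ∑ i, |a i * (b i : EuclideanSpace ℝ (Fin n) → ℝ) x| :=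
            Finset.abs_sum_le_sum_abs _ _
        _ ≤ ∑ i, |a i| * (Cm i * (1 + r) ^ d) := by
            refine Finset.sum_le_sum fun i _ => ?_
            rw [abs_mul]
            refine mul_le_mul_of_nonneg_left ?_ (abs_nonneg _)
            calc |(b i : EuclideanSpace ℝ (Fin n) → ℝ) x| ≤ C i * (1 + r) ^ d :=
                  hC i r hr x hx
              _ ≤ Cm i * (1 + r) ^ d :=
                  mul_le_mul_of_nonneg_right (le_max_left _ _) (hrpow0 r hr)
        _ = (∑ i, |a i| * Cm i) * (1 + r) ^ d := by
            rw [Finset.sum_mul]; exact Finset.sum_congr rfl fun i _ => by ring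
    have hubnn : 0 ≤ (∑ i, |a i| * Cm i) * (1 + r) ^ d :=
      mul_nonneg (Finset.sum_nonneg fun i _ =>
        mul_nonneg (abs_nonneg _) (le_max_right _ _)) (hrpow0 r hr)
    have hI := integral_sq_le hn _ (hcont v) hr hubnn hub
    rw [hBapp]
    refine hI.trans ?_
    have hCS : (∑ i, |a i| * Cm i) ^ 2 ≤ (∑ i, |a i| ^ 2) * S := by
      simpa [hSdef] using Finset.sum_mul_sq_le_sq_mul_sq Finset.univ (fun i => |a i|) Cm
    have habs : (∑ i, |a i| ^ 2) = ∑ i, a i * a i :=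
      Finset.sum_congr rfl fun i _ => by rw [sq_abs, sq]
    have hdd : ((1 + r) ^ d) ^ 2 = (1 + r) ^ (2 * d) := by
      rw [← Real.rpow_natCast ((1 + r) ^ d) 2, ← Real.rpow_mul (by linarith)]
      norm_num [mul_comm d 2]
    calc ((∑ i, |a i| * Cm i) * (1 + r) ^ d) ^ 2 * (r ^ n * ω)
        = (∑ i, |a i| * Cm i) ^ 2 * (1 + r) ^ (2 * d) * (r ^ n * ω) := by
          rw [mul_pow, hdd]
      _ ≤ ((∑ i, a i * a i) * S) * (1 + r) ^ (2 * d) * (r ^ n * ω) := by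
          rw [← habs]
          have h2 : (0:ℝ) ≤ (1 + r) ^ (2 * d) := Real.rpow_nonneg (by linarith) _
          have h3 : (0:ℝ) ≤ r ^ n * ω := by positivity
          exact mul_le_mul_of_nonneg_right (mul_le_mul_of_nonneg_right hCS h2) h3
      _ = S * (1 + r) ^ (2 * d) * (r ^ n * ω) * Bf R₀ v v := by
          rw [hB0v]; ring
  set r : ℕ → ℝ := fun j => R₀ * ((1 + h) ^ 2) ^ j with hrdef
  have hq1 : (1:ℝ) ≤ (1 + h) ^ 2 := by nlinarith
  have hrj1 : ∀ j, 1 ≤ r j := by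
    intro j
    have h1 : (1:ℝ) ≤ ((1 + h) ^ 2) ^ j := one_le_pow₀ hq1
    simp only [hrdef]; nlinarith
  have hrposj : ∀ j, 0 < r j := fun j => lt_of_lt_of_le one_pos (hrj1 j)
  have hrR₀ : ∀ j, R₀ ≤ r j := by
    intro j
    have h1 : (1:ℝ) ≤ ((1 + h) ^ 2) ^ j := one_le_pow₀ hq1
    calc R₀ = R₀ * 1 := (mul_one _).symm
      _ ≤ R₀ * ((1 + h) ^ 2) ^ j := mul_le_mul_of_nonneg_left h1 (by linarith)
  have hrsucc : ∀ j, r (j + 1) = (1 + h) ^ 2 * r j := by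
    intro j; simp only [hrdef]; ring
  have hrmono : ∀ j, r j ≤ r (j + 1) := by
    intro j
    rw [hrsucc j]
    nlinarith [hrposj j]
  set Λ : ℝ := (16:ℝ) ^ n * (1 + h) ^ (8 * d) with hΛdef
  have hΛ1 : 1 ≤ Λ := by
    have h1 : (1:ℝ) ≤ (16:ℝ) ^ n := one_le_pow₀ (by norm_num)
    have h2 : (1:ℝ) ≤ (1 + h) ^ (8 * d) := Real.one_le_rpow (by linarith) (by positivity)
    nlinarith
  by_cases hex : ∃ (j : ℕ) (K' : Submodule ℝ ↥H), Module.finrank ℝ ↥K' = k ∧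
      ∀ w ∈ K', Bf (r (j + 1)) w w ≤ Λ * Bf (r j) w w
  · obtain ⟨j, K', hKrank, hKbound⟩ := hex
    refine ⟨K'.map H.subtype, Submodule.map_subtype_le H K', ?_, r j, hrposj j, ?_⟩
    · rw [← hKrank]
      exact ((Submodule.equivMapOfInjective H.subtype
        (Submodule.injective_subtype H) K').finrank_eq).symm
    · intro v hv hv0
      obtain ⟨w, hwK', hwv⟩ := Submodule.mem_map.mp hv
      subst hwv
      have hb2 := hKbound w hwK'
      have e1 : ∀ ρ : ℝ, ∫ x in ball (0 : EuclideanSpace ℝ (Fin n)) ρ,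
          ((H.subtype w) x) ^ 2 = Bf ρ w w := by
        intro ρ
        rw [hBapp]
        simp only [Submodule.subtype_apply, sq]
      rw [e1, e1, ← hrsucc j]
      refine hb2.trans (le_of_eq ?_)
      rw [hΛdef] <;> ring
  · exfalso
    push_neg at hex
    set c : Module.Basis (Fin (Module.finrank ℝ ↥H)) ℝ ↥H := Module.finBasis ℝ ↥H with hcdef
    set D : ℕ → ℝ := fun j => (LinearMap.toMatrix₂ c c (Bf (r j))).det with hDdef
    have hDpos : 0 < D 0 :=
      gram_det_pos (Bf (r 0)) (hsymm _) (fun v hv => hpos (hrR₀ 0) v hv) c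
    have hstep : ∀ j, Λ ^ (k + 1) * D j ≤ D (j + 1) := by
      intro j
      rcases gram_step k hHrank (Bf (r j)) (Bf (r (j + 1))) (hsymm _)
        (fun v hv => hpos (hrR₀ j) v hv) (hsymm _)
        (fun v => hmono (hrmono j) v) Λ hΛ1 c with hK | hdet
      · obtain ⟨K', hKr, hKb⟩ := hK
        obtain ⟨w, hw, hlt⟩ := hex j K' hKr
        exact absurd (hKb w hw) (not_le.mpr hlt)
      · exact hdet
    have hiter : ∀ m, Λ ^ ((k + 1) * m) * D 0 ≤ D m := by
      intro m
      induction m with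
      | zero => simp
      | succ m ih =>
        have h1 : Λ ^ ((k + 1) * (m + 1)) * D 0 = Λ ^ (k + 1) * (Λ ^ ((k + 1) * m) * D 0) := by
          rw [← mul_assoc, ← pow_add]; congr 2; ring
        rw [h1]
        calc Λ ^ (k + 1) * (Λ ^ ((k + 1) * m) * D 0) ≤ Λ ^ (k + 1) * D m :=
              mul_le_mul_of_nonneg_left ih (by positivity)
          _ ≤ D (m + 1) := hstep m
    have hr0 : r 0 = R₀ := by simp [hrdef]
    have hupper : ∀ m, D m ≤ (S * (1 + r m) ^ (2 * d) * (r m ^ n * ω)) ^ (2 * k) * D 0 := by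
      intro m
      have h2 := gram_det_upper (Bf (r 0)) (Bf (r m)) (hsymm _)
        (fun v hv => hpos (hrR₀ 0) v hv) (hsymm _)
        (fun v => hmono (by rw [hr0]; exact hrR₀ m) v)
        (S * (1 + r m) ^ (2 * d) * (r m ^ n * ω))
        (fun v => by rw [hr0]; exact hM (r m) (hrposj m) v) c (2 * k) hHrank
      exact h2
    have hfin : ∀ m, Λ ^ ((k + 1) * m) ≤ (S * (1 + r m) ^ (2 * d) * (r m ^ n * ω)) ^ (2 * k) := by
      intro m
      exact le_of_mul_le_mul_right ((hiter m).trans (hupper m)) hDpos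
    exact arith n k hn hk d h hd hh0 hh1 R₀ hR₀1 S ω hS0 hω0 fun m => by
      have h3 := hfin m
      rw [hΛdef] at h3
      simpa only [hrdef] using h3
end
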